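/- arXiv:1705.00119 — 6 statements merged into one kernel-verified Lean document; each statement's English description precedes it below -/
import Mathlib

section
/- Let G be a finite connected simple graph on n vertices and let S be a set of k ≥ 3 spanning trees of G that are pairwise adjacent in Aux(G). Then the common intersection of the edge sets of the trees in S has cardinality either n − 2 or n − k. -/
open SimpleGraph

/-- A spanning tree of `G`: a spanning subgraph (a graph on the same vertex set whose
edges are edges of `G`) that is a tree (connected and acyclic). -/
def IsSpanningTree {V : Type*} (G T : SimpleGraph V) : Prop :=
  T ≤ G ∧ T.IsTree

/-- The spanning tree auxiliary graph `Aux G`: vertices are the spanning trees of `G`,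
two spanning trees being adjacent iff the symmetric difference of their edge sets has
exactly two edges. -/
def Aux {V : Type*} (G : SimpleGraph V) :
    SimpleGraph {T : SimpleGraph V // IsSpanningTree G T} where
  Adj T₁ T₂ := (symmDiff T₁.1.edgeSet T₂.1.edgeSet).ncard = 2
  symm := by
    constructor
    intro T₁ T₂ h
    rwa [symmDiff_comm]
  loopless := by
    constructor
    intro T h
    simp [symmDiff_self] at h

/-- `G` is 2-connected: it is connected and remains connected after deleting any
single vertex. -/
def TwoConnected {V : Type*} (G : SimpleGraph V) : Prop :=
  G.Connected ∧ ∀ v : V, (G.induce ({v}ᶜ : Set V)).Connected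

private lemma eq_singleton_of_ncard_one {α : Type*} {s : Set α} (h : s.ncard = 1)
    {y : α} (hy : y ∈ s) : s = {y} := by
  obtain ⟨c, rfl⟩ := Set.ncard_eq_one.mp h
  simp only [Set.mem_singleton_iff] at hy
  subst hy; rfl

private lemma diff_ncard_one {α : Type*} {A B : Set α} (hA : A.Finite) (hB : B.Finite)
    (hcd : A.ncard = B.ncard) (h : (symmDiff A B).ncard = 2) : (A \ B).ncard = 1 := by
  have h1 := Set.ncard_inter_add_ncard_diff_eq_ncard A B hA
  have h2 := Set.ncard_inter_add_ncard_diff_eq_ncard B A hB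
  have hu : (symmDiff A B).ncard = (A \ B).ncard + (B \ A).ncard := by
    rw [Set.symmDiff_def,
      Set.ncard_union_eq disjoint_sdiff_sdiff hA.diff hB.diff]
  rw [Set.inter_comm B A] at h2
  omega

private lemma key {α ι : Type*} (S : Finset ι) (hk : 3 ≤ S.card)
    (E : ι → Set α) (m : ℕ) (hfin : ∀ i ∈ S, (E i).Finite)
    (hm : ∀ i ∈ S, (E i).ncard = m)
    (hpair : ∀ i ∈ S, ∀ j ∈ S, i ≠ j → (E i \ E j).ncard = 1) :
    (⋂ i ∈ S, E i).ncard = m - 1 ∨ (⋂ i ∈ S, E i).ncard = m - (S.card - 1) := by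
  classical
  have hEne : ∀ i ∈ S, ∀ j ∈ S, i ≠ j → E i ≠ E j := by
    intro i hi j hj hij heq
    have := hpair i hi j hj hij
    rw [heq, sdiff_self] at this
    simp at this
  obtain ⟨T₁, hT₁, T₂, hT₂, hne⟩ := Finset.one_lt_card.mp (by omega : 1 < S.card)
  obtain ⟨a, ha⟩ := Set.ncard_eq_one.mp (hpair T₁ hT₁ T₂ hT₂ hne)
  obtain ⟨b, hb⟩ := Set.ncard_eq_one.mp (hpair T₂ hT₂ T₁ hT₁ hne.symm)
  have haE : a ∈ E T₁ ∧ a ∉ E T₂ := by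
    have : a ∈ E T₁ \ E T₂ := by rw [ha]; rfl
    exact ⟨this.1, this.2⟩
  have hbE : b ∈ E T₂ ∧ b ∉ E T₁ := by
    have : b ∈ E T₂ \ E T₁ := by rw [hb]; rfl
    exact ⟨this.1, this.2⟩
  by_cases hcase : ∀ T ∈ S, E T₁ ∩ E T₂ ⊆ E T
  · left
    have hIeq : (⋂ i ∈ S, E i) = E T₁ ∩ E T₂ := by
      apply subset_antisymm
      · exact Set.subset_inter (Set.biInter_subset_of_mem hT₁) (Set.biInter_subset_of_mem hT₂)
      · intro x hx
        exact Set.mem_biInter fun T hT => hcase T hT hx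
    rw [hIeq]
    have h1 := Set.ncard_inter_add_ncard_diff_eq_ncard (E T₁) (E T₂) (hfin T₁ hT₁)
    rw [hm T₁ hT₁, hpair T₁ hT₁ T₂ hT₂ hne] at h1
    omega
  · right
    push_neg at hcase
    obtain ⟨T₃, hT₃, hnsub⟩ := hcase
    obtain ⟨y, hy12, hy3⟩ := Set.not_subset.mp hnsub
    have hT₃1 : T₃ ≠ T₁ := fun h => hy3 (h ▸ hy12.1)
    have hT₃2 : T₃ ≠ T₂ := fun h => hy3 (h ▸ hy12.2)
    have h13 : E T₁ \ E T₃ = {y} :=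
      eq_singleton_of_ncard_one (hpair T₁ hT₁ T₃ hT₃ hT₃1.symm) ⟨hy12.1, hy3⟩
    have h23 : E T₂ \ E T₃ = {y} :=
      eq_singleton_of_ncard_one (hpair T₂ hT₂ T₃ hT₃ hT₃2.symm) ⟨hy12.2, hy3⟩
    have hb3 : b ∈ E T₃ := by
      by_contra hb3
      have : b ∈ E T₂ \ E T₃ := ⟨hbE.1, hb3⟩
      rw [h23] at this
      exact hbE.2 (this ▸ hy12.1)
    have ha3 : a ∈ E T₃ := by
      by_contra ha3
      have : a ∈ E T₁ \ E T₃ := ⟨haE.1, ha3⟩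
      rw [h13] at this
      exact haE.2 (this ▸ hy12.2)
    -- every tree other than T₁ contains b
    have hbmem : ∀ T ∈ S, T ≠ T₁ → b ∈ E T := by
      intro T hT hTne
      by_cases hTT2 : T = T₂
      · exact hTT2 ▸ hbE.1
      by_cases hTT3 : T = T₃
      · exact hTT3 ▸ hb3
      by_contra hbT
      have h2T : E T₂ \ E T = {b} :=
        eq_singleton_of_ncard_one (hpair T₂ hT₂ T hT (Ne.symm hTT2)) ⟨hbE.1, hbT⟩
      have h3T : E T₃ \ E T = {b} :=
        eq_singleton_of_ncard_one (hpair T₃ hT₃ T hT (Ne.symm hTT3)) ⟨hb3, hbT⟩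
      have hsub1 : E T₁ ⊆ E T := by
        intro x hx
        by_cases hxa : x = a
        · subst hxa
          by_contra hxT
          have : x ∈ E T₃ \ E T := ⟨ha3, hxT⟩
          rw [h3T] at this
          exact hbE.2 (this ▸ hx)
        · have hx2 : x ∈ E T₂ := by
            by_contra hx2
            have : x ∈ E T₁ \ E T₂ := ⟨hx, hx2⟩
            rw [ha] at this
            exact hxa this
          by_contra hxT
          have : x ∈ E T₂ \ E T := ⟨hx2, hxT⟩
          rw [h2T] at this
          exact hbE.2 (this ▸ hx)
      have : E T₁ = E T :=
        Set.eq_of_subset_of_ncard_le hsub1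
          (by rw [hm T hT, hm T₁ hT₁]) (hfin T hT)
      exact hEne T₁ hT₁ T hT hTne.symm this
    -- choose, for each T ≠ T₁, the unique element of E T₁ \ E T
    have hf : ∀ T : ι, ∃ c, T ∈ S.erase T₁ → E T₁ \ E T = {c} := by
      intro T
      by_cases h : T ∈ S.erase T₁
      · obtain ⟨c, hc⟩ := Set.ncard_eq_one.mp
          (hpair T₁ hT₁ T (Finset.mem_of_mem_erase h) (Finset.ne_of_mem_erase h).symm)
        exact ⟨c, fun _ => hc⟩
      · exact ⟨a, fun h' => absurd h' h⟩
    choose f hfspec using hf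
    have hfmem : ∀ T ∈ S.erase T₁, f T ∈ E T₁ ∧ f T ∉ E T := by
      intro T hT
      have : f T ∈ E T₁ \ E T := by rw [hfspec T hT]; rfl
      exact ⟨this.1, this.2⟩
    have hstruct : ∀ T ∈ S.erase T₁, E T = (E T₁ \ {f T}) ∪ {b} := by
      intro T hT
      have hTS := Finset.mem_of_mem_erase hT
      have hTne := Finset.ne_of_mem_erase hT
      have hsub : (E T₁ \ {f T}) ∪ {b} ⊆ E T := by
        intro x hx
        rcases hx with hx | hx
        · by_contra hxT
          have : x ∈ E T₁ \ E T := ⟨hx.1, hxT⟩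
          rw [hfspec T hT] at this
          exact hx.2 this
        · exact hx ▸ hbmem T hTS hTne
      refine (Set.eq_of_subset_of_ncard_le hsub ?_ (hfin T hTS)).symm
      rw [hm T hTS]
      have hbnot : b ∉ E T₁ \ {f T} := fun h => hbE.2 h.1
      rw [Set.union_singleton, Set.ncard_insert_of_notMem hbnot
        (hfin T₁ hT₁).diff,
        Set.ncard_diff_singleton_of_mem (hfmem T hT).1]
      rw [hm T₁ hT₁]
      have hm1 : 1 ≤ m := by
        rw [← hm T₁ hT₁]
        exact (Set.ncard_pos (hfin T₁ hT₁)).mpr ⟨a, haE.1⟩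
      omega
    have hinj : Set.InjOn f ↑(S.erase T₁) := by
      intro T hT T' hT' hff
      by_contra hne'
      have : E T = E T' := by rw [hstruct T hT, hstruct T' hT', hff]
      exact hEne T (Finset.mem_of_mem_erase hT) T' (Finset.mem_of_mem_erase hT') hne' this
    have hIeq : (⋂ i ∈ S, E i) = E T₁ \ (f '' ↑(S.erase T₁)) := by
      ext x
      simp only [Set.mem_iInter, Set.mem_diff, Set.mem_image, Finset.mem_coe]
      constructor
      · intro hx
        refine ⟨hx T₁ hT₁, ?_⟩
        rintro ⟨T, hT, rfl⟩
        exact (hfmem T hT).2 (hx T (Finset.mem_of_mem_erase hT))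
      · rintro ⟨hx1, hx2⟩ T hT
        by_cases hTT1 : T = T₁
        · exact hTT1 ▸ hx1
        · have hTe : T ∈ S.erase T₁ := Finset.mem_erase.mpr ⟨hTT1, hT⟩
          by_contra hxT
          have : x ∈ E T₁ \ E T := ⟨hx1, hxT⟩
          rw [hfspec T hTe] at this
          exact hx2 ⟨T, hTe, this.symm⟩
    rw [hIeq, Set.ncard_diff (fun x hx => by
        obtain ⟨T, hT, rfl⟩ := hx; exact (hfmem T hT).1)
      ((hfin T₁ hT₁).subset (fun x hx => by
        obtain ⟨T, hT, rfl⟩ := hx; exact (hfmem T hT).1)),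
      Set.ncard_image_of_injOn hinj, Set.ncard_coe_finset,
      Finset.card_erase_of_mem hT₁, hm T₁ hT₁]

/-- If `S` is a set of `k ≥ 3` spanning trees of a connected graph `G` on `n` vertices
that are pairwise adjacent in `Aux G`, then the common intersection of their edge sets
has cardinality `n - 2` or `n - k`. -/
theorem stmt1 {V : Type*} [Fintype V] (G : SimpleGraph V) (hG : G.Connected)
    (S : Finset {T : SimpleGraph V // IsSpanningTree G T})
    (hk : 3 ≤ S.card)
    (hadj : (S : Set {T : SimpleGraph V // IsSpanningTree G T}).Pairwise (Aux G).Adj) :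
    (⋂ T ∈ S, (T : {T : SimpleGraph V // IsSpanningTree G T}).1.edgeSet).ncard
        = Fintype.card V - 2 ∨
    (⋂ T ∈ S, (T : {T : SimpleGraph V // IsSpanningTree G T}).1.edgeSet).ncard
        = Fintype.card V - S.card := by
  classical
  haveI : Nonempty V := hG.nonempty
  have hn1 : 1 ≤ Fintype.card V := Fintype.card_pos
  have hm : ∀ T ∈ S, (T : {T : SimpleGraph V // IsSpanningTree G T}).1.edgeSet.ncard
      = Fintype.card V - 1 := by
    intro T _
    have h := T.2.2.card_edgeFinset
    rw [Set.ncard_eq_toFinset_card']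
    have : T.1.edgeSet.toFinset = T.1.edgeFinset := rfl
    rw [this]
    omega
  have hpair : ∀ T ∈ S, ∀ T' ∈ S, T ≠ T' →
      ((T : {T : SimpleGraph V // IsSpanningTree G T}).1.edgeSet \ T'.1.edgeSet).ncard = 1 := by
    intro T hT T' hT' hne
    have hadj' : (Aux G).Adj T T' := hadj hT hT' hne
    have h2 : (symmDiff T.1.edgeSet T'.1.edgeSet).ncard = 2 := hadj'
    exact diff_ncard_one (Set.toFinite _) (Set.toFinite _)
      (by rw [hm T hT, hm T' hT']) h2
  have := key S hk (fun T => T.1.edgeSet) (Fintype.card V - 1)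
    (fun T _ => Set.toFinite _) hm hpair
  rcases this with h | h
  · left; rw [h]; omega
  · right; rw [h]; omega
end

section
/- Let G be a finite connected simple graph on n vertices and let S be a clique of Aux(G) with at least 3 vertices (a set of at least three spanning trees of G that are pairwise adjacent in Aux(G)). Then there exists a unique maximal clique of Aux(G) containing S; that is, there is exactly one set M of vertices of Aux(G) such that S ⊆ M, M is a clique of Aux(G), and no clique of Aux(G) properly contains M. -/
open SimpleGraph

section Helpers

variable {α : Type*}

lemma aux_tri {s t u : Set α} (h1 : (s \ t).ncard = 1) (h2 : (s \ u).ncard = 1)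
    (h3 : (u \ t).ncard = 1) : s ∩ t ⊆ u ∨ u ⊆ s ∪ t := by
  obtain ⟨e, he⟩ := Set.ncard_eq_one.mp h1
  obtain ⟨g, hg⟩ := Set.ncard_eq_one.mp h2
  by_cases hgt : g ∈ t
  · right
    have hes : e ∈ s ∧ e ∉ t := by
      have : e ∈ s \ t := by rw [he]; rfl
      exact ⟨this.1, this.2⟩
    have heg : e ≠ g := fun h => hes.2 (h ▸ hgt)
    have heu : e ∈ u := by
      by_contra h
      have : e ∈ s \ u := ⟨hes.1, h⟩
      rw [hg] at this
      exact heg this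
    obtain ⟨x, hx⟩ := Set.ncard_eq_one.mp h3
    have hex : x = e := by
      have : e ∈ u \ t := ⟨heu, hes.2⟩
      rw [hx] at this
      exact this.symm
    intro y hy
    by_cases hyt : y ∈ t
    · exact Or.inr hyt
    · have : y ∈ u \ t := ⟨hy, hyt⟩
      rw [hx, hex] at this
      rw [this]
      exact Or.inl hes.1
  · left
    intro x hx
    by_contra hxu
    have : x ∈ s \ u := ⟨hx.1, hxu⟩
    rw [hg] at this
    rw [this] at hx
    exact hgt hx.2

lemma aux_exchange {s t : Set α} (hs : s.Finite) (ht : t.Finite)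
    (hcard : s.ncard = t.ncard) (h : (symmDiff s t).ncard = 2) :
    (s \ t).ncard = 1 ∧ (t \ s).ncard = 1 := by
  rw [Set.symmDiff_def,
    Set.ncard_union_eq disjoint_sdiff_sdiff hs.diff ht.diff] at h
  have h1 := Set.ncard_inter_add_ncard_diff_eq_ncard s t hs
  have h2 := Set.ncard_inter_add_ncard_diff_eq_ncard t s ht
  rw [Set.inter_comm t s] at h2
  omega

end Helpers

/-- The edge set of a spanning tree, as a subtype projection. -/
def ES {V : Type*} {G : SimpleGraph V} (T : {T : SimpleGraph V // IsSpanningTree G T}) :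
    Set (Sym2 V) := T.1.edgeSet

lemma ES_inj {V : Type*} {G : SimpleGraph V}
    {T T' : {T : SimpleGraph V // IsSpanningTree G T}} (h : ES T = ES T') : T = T' :=
  Subtype.ext (SimpleGraph.edgeSet_inj.mp h)

lemma tree_ncard {V : Type*} [Fintype V] {G T : SimpleGraph V} (h : IsSpanningTree G T) :
    T.edgeSet.ncard + 1 = Fintype.card V := by
  classical
  have hc := h.2.card_edgeFinset
  rwa [Set.ncard_eq_toFinset_card', ← SimpleGraph.edgeFinset]

/-- Every clique of `Aux G` with at least 3 vertices extends to a unique maximal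
clique of `Aux G`. -/
theorem stmt2 {V : Type*} [Fintype V] (G : SimpleGraph V) (hG : G.Connected)
    (S : Set {T : SimpleGraph V // IsSpanningTree G T})
    (hS : (Aux G).IsClique S) (h3 : 3 ≤ S.ncard) :
    ∃! M : Set {T : SimpleGraph V // IsSpanningTree G T},
      S ⊆ M ∧ (Aux G).IsClique M ∧
        ∀ M', (Aux G).IsClique M' → ¬ M ⊂ M' := by
  classical
  have hfin : ∀ T : {T : SimpleGraph V // IsSpanningTree G T}, (ES T).Finite :=
    fun T => Set.toFinite _
  have hcard : ∀ T T' : {T : SimpleGraph V // IsSpanningTree G T},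
      (ES T).ncard = (ES T').ncard := by
    intro T T'
    show T.1.edgeSet.ncard = T'.1.edgeSet.ncard
    have c1 := tree_ncard T.2
    have c2 := tree_ncard T'.2
    omega
  have hP : ∀ T T' : {T : SimpleGraph V // IsSpanningTree G T}, (Aux G).Adj T T' →
      (ES T \ ES T').ncard = 1 ∧ (ES T' \ ES T).ncard = 1 :=
    fun T T' h => aux_exchange (hfin T) (hfin T') (hcard T T') h
  -- three distinct elements of S
  obtain ⟨T1, hT1⟩ : S.Nonempty := Set.nonempty_of_ncard_ne_zero (by omega)
  obtain ⟨T2, hT2, hne21⟩ : ∃ T2 ∈ S, T2 ≠ T1 :=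
    Set.exists_ne_of_one_lt_ncard (by omega) T1
  obtain ⟨T3, hT3, hne31, hne32⟩ : ∃ T3 ∈ S, T3 ≠ T1 ∧ T3 ≠ T2 := by
    by_contra h
    push_neg at h
    have hsub : S ⊆ {T1, T2} := by
      intro x hx
      by_cases hx1 : x = T1
      · exact Or.inl hx1
      · exact Or.inr (h x hx hx1)
    have h1 : S.ncard ≤ ({T1, T2} : Set _).ncard :=
      Set.ncard_le_ncard hsub ((Set.finite_singleton T2).insert T1)
    have h2 : ({T1, T2} : Set _).ncard ≤ 2 := by
      have := Set.ncard_insert_le T1 ({T2} : Set _)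
      simpa [Set.ncard_singleton] using this
    omega
  have a12 : (Aux G).Adj T1 T2 := hS hT1 hT2 (Ne.symm hne21)
  have a13 : (Aux G).Adj T1 T3 := hS hT1 hT3 (Ne.symm hne31)
  have a23 : (Aux G).Adj T2 T3 := hS hT2 hT3 (Ne.symm hne32)
  obtain ⟨p12, p21⟩ := hP T1 T2 a12
  obtain ⟨p13, p31⟩ := hP T1 T3 a13
  obtain ⟨p23, p32⟩ := hP T2 T3 a23
  obtain ⟨M₀, hM₀clique, hM₀key⟩ :
      ∃ M₀, (Aux G).IsClique M₀ ∧
        ∀ M, (Aux G).IsClique M → T1 ∈ M → T2 ∈ M → T3 ∈ M → M ⊆ M₀ := by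
    rcases aux_tri p12 p13 p32 with hF | hU
    · -- forest case : ES T1 ∩ ES T2 ⊆ ES T3
      set F : Set (Sym2 V) := ES T1 ∩ ES T2 with hFdef
      have hFfin : F.Finite := (hfin T1).inter_of_left _
      have hFs : F ⊆ ES T1 := Set.inter_subset_left
      have hFt : F ⊆ ES T2 := Set.inter_subset_right
      have hFcard : F.ncard + 1 = (ES T1).ncard := by
        have h := Set.ncard_inter_add_ncard_diff_eq_ncard (ES T1) (ES T2) (hfin T1)
        rw [← hFdef] at h
        omega
      -- each tree containing F is F plus one edge
      have hsingle : ∀ T : {T : SimpleGraph V // IsSpanningTree G T}, F ⊆ ES T →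
          ∃ x, x ∉ F ∧ ES T = F ∪ {x} := by
        intro T hFT
        have h1 : (ES T \ F).ncard + F.ncard = (ES T).ncard :=
          Set.ncard_diff_add_ncard_of_subset hFT (hfin T)
        have h2 : (ES T).ncard = (ES T1).ncard := hcard T T1
        have h3 : (ES T \ F).ncard = 1 := by omega
        obtain ⟨x, hx⟩ := Set.ncard_eq_one.mp h3
        refine ⟨x, ?_, ?_⟩
        · have : x ∈ ES T \ F := by rw [hx]; rfl
          exact this.2
        · rw [← Set.diff_union_of_subset hFT, hx]
          exact Set.union_comm _ _
      refine ⟨{T | F ⊆ ES T}, ?_, ?_⟩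
      · -- it is a clique
        intro T hT T' hT' hne
        obtain ⟨x, hxF, hxT⟩ := hsingle T hT
        obtain ⟨y, hyF, hyT⟩ := hsingle T' hT'
        have hxy : x ≠ y := by
          intro h
          exact hne (ES_inj (by rw [hxT, hyT, h]))
        show (symmDiff (ES T) (ES T')).ncard = 2
        have hsd : symmDiff (ES T) (ES T') = {x, y} := by
          rw [hxT, hyT]
          ext z
          simp only [Set.mem_symmDiff, Set.mem_union, Set.mem_singleton_iff,
            Set.mem_insert_iff]
          constructor
          · rintro (⟨h1, h2⟩ | ⟨h1, h2⟩) <;> tauto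
          · rintro (rfl | rfl)
            · exact Or.inl ⟨Or.inr rfl, fun h => h.elim (fun h => hxF h) (fun h => hxy h)⟩
            · exact Or.inr ⟨Or.inr rfl, fun h => h.elim (fun h => hyF h) (fun h => hxy h.symm)⟩
        rw [hsd, Set.ncard_pair hxy]
      · -- every clique containing T1 T2 T3 is inside
        intro M hM hM1 hM2 hM3 T hT
        show F ⊆ ES T
        by_cases e1 : T = T1
        · rw [e1]; exact hFs
        by_cases e2 : T = T2
        · rw [e2]; exact hFt
        by_cases e3 : T = T3
        · rw [e3]; exact hF
        obtain ⟨q1, q1'⟩ := hP T1 T (hM hM1 hT (Ne.symm e1))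
        obtain ⟨q2, q2'⟩ := hP T2 T (hM hM2 hT (Ne.symm e2))
        obtain ⟨q3, q3'⟩ := hP T3 T (hM hM3 hT (Ne.symm e3))
        -- ES T3 = F ∪ {w} with w ∉ ES T1, w ∉ ES T2
        obtain ⟨w, hwF, hwu⟩ := hsingle T3 hF
        have hws : w ∉ ES T1 := by
          intro hw
          have hsub : ES T3 ⊆ ES T1 := by
            rw [hwu]
            exact Set.union_subset hFs (by simpa using hw)
          have := Set.eq_of_subset_of_ncard_le hsub (le_of_eq (hcard T1 T3)) (hfin T1)
          exact hne31 (ES_inj this)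
        have hwt : w ∉ ES T2 := by
          intro hw
          have hsub : ES T3 ⊆ ES T2 := by
            rw [hwu]
            exact Set.union_subset hFt (by simpa using hw)
          have := Set.eq_of_subset_of_ncard_le hsub (le_of_eq (hcard T2 T3)) (hfin T2)
          exact hne32 (ES_inj this)
        have hsu : ES T1 ∩ ES T3 = F := by
          apply Set.Subset.antisymm
          · rintro z ⟨hz1, hz3⟩
            rw [hwu] at hz3
            rcases hz3 with hz3 | hz3
            · exact hz3
            · exact absurd (Set.mem_singleton_iff.mp hz3 ▸ hz1) hws
          · exact Set.subset_inter hFs hF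
        have htu : ES T2 ∩ ES T3 = F := by
          apply Set.Subset.antisymm
          · rintro z ⟨hz2, hz3⟩
            rw [hwu] at hz3
            rcases hz3 with hz3 | hz3
            · exact hz3
            · exact absurd (Set.mem_singleton_iff.mp hz3 ▸ hz2) hwt
          · exact Set.subset_inter hFt hF
        rcases aux_tri p12 q1 q2' with h12' | h12'
        · exact h12'
        rcases aux_tri p13 q1 q3' with h13' | h13'
        · rw [hsu] at h13'; exact h13'
        rcases aux_tri p23 q2 q3' with h23' | h23'
        · rw [htu] at h23'; exact h23'
        exfalso
        obtain ⟨z, hz⟩ := Set.ncard_eq_one.mp q1'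
        have hzT : z ∈ ES T ∧ z ∉ ES T1 := by
          have : z ∈ ES T \ ES T1 := by rw [hz]; rfl
          exact ⟨this.1, this.2⟩
        have hzt : z ∈ ES T2 := by
          rcases h12' hzT.1 with h | h
          · exact absurd h hzT.2
          · exact h
        have hzu : z ∈ ES T3 := by
          rcases h13' hzT.1 with h | h
          · exact absurd h hzT.2
          · exact h
        have : z ∈ F := htu ▸ ⟨hzt, hzu⟩
        exact hzT.2 (hFs this)
    · -- cycle case : ES T3 ⊆ ES T1 ∪ ES T2
      set U : Set (Sym2 V) := ES T1 ∪ ES T2 with hUdef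
      have hUfin : U.Finite := (hfin T1).union (hfin T2)
      have hUcard : U.ncard = (ES T1).ncard + 1 := by
        have hd : Disjoint (ES T1) (ES T2 \ ES T1) := Set.disjoint_sdiff_right
        have : U = ES T1 ∪ (ES T2 \ ES T1) := by rw [Set.union_diff_self]
        rw [this, Set.ncard_union_eq hd (hfin T1) (hfin T2).diff, p21]
      have hsingle : ∀ T : {T : SimpleGraph V // IsSpanningTree G T}, ES T ⊆ U →
          ∃ x, x ∈ U ∧ ES T = U \ {x} := by
        intro T hTU
        have h1 : (U \ ES T).ncard + (ES T).ncard = U.ncard :=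
          Set.ncard_diff_add_ncard_of_subset hTU hUfin
        have h2 : (ES T).ncard = (ES T1).ncard := hcard T T1
        have h3 : (U \ ES T).ncard = 1 := by omega
        obtain ⟨x, hx⟩ := Set.ncard_eq_one.mp h3
        refine ⟨x, ?_, ?_⟩
        · have : x ∈ U \ ES T := by rw [hx]; rfl
          exact this.1
        · rw [← Set.diff_diff_cancel_left hTU, hx]
      refine ⟨{T | ES T ⊆ U}, ?_, ?_⟩
      · intro T hT T' hT' hne
        obtain ⟨x, hxU, hxT⟩ := hsingle T hT
        obtain ⟨y, hyU, hyT⟩ := hsingle T' hT'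
        have hxy : x ≠ y := by
          intro h
          exact hne (ES_inj (by rw [hxT, hyT, h]))
        show (symmDiff (ES T) (ES T')).ncard = 2
        have hsd : symmDiff (ES T) (ES T') = {y, x} := by
          rw [hxT, hyT]
          ext z
          simp only [Set.mem_symmDiff, Set.mem_diff, Set.mem_singleton_iff,
            Set.mem_insert_iff]
          constructor
          · rintro (⟨⟨h1, h2⟩, h3⟩ | ⟨⟨h1, h2⟩, h3⟩)
            · by_cases hzy : z = y
              · exact Or.inl hzy
              · exact absurd ⟨h1, hzy⟩ h3
            · by_cases hzx : z = x
              · exact Or.inr hzx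
              · exact absurd ⟨h1, hzx⟩ h3
          · rintro (rfl | rfl)
            · exact Or.inl ⟨⟨hyU, fun h => hxy h.symm⟩, fun h => h.2 rfl⟩
            · exact Or.inr ⟨⟨hxU, hxy⟩, fun h => h.2 rfl⟩
        rw [hsd, Set.ncard_pair (Ne.symm hxy)]
      · intro M hM hM1 hM2 hM3 T hT
        show ES T ⊆ U
        by_cases e1 : T = T1
        · rw [e1]; exact Set.subset_union_left
        by_cases e2 : T = T2
        · rw [e2]; exact Set.subset_union_right
        by_cases e3 : T = T3
        · rw [e3]; exact hU
        obtain ⟨q1, q1'⟩ := hP T1 T (hM hM1 hT (Ne.symm e1))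
        obtain ⟨q2, q2'⟩ := hP T2 T (hM hM2 hT (Ne.symm e2))
        obtain ⟨q3, q3'⟩ := hP T3 T (hM hM3 hT (Ne.symm e3))
        obtain ⟨e, heU, heu⟩ := hsingle T3 hU
        have heu' : e ∉ ES T3 := by rw [heu]; exact fun h => h.2 rfl
        have hes : e ∈ ES T1 := by
          by_contra h
          have hsub : ES T1 \ ES T3 = ∅ := by
            apply Set.eq_empty_iff_forall_notMem.mpr
            rintro z ⟨hz1, hz3⟩
            have : z ∈ U \ ES T3 := ⟨Or.inl hz1, hz3⟩
            rw [heu, Set.diff_diff_cancel_left (by simpa using heU : ({e} : Set (Sym2 V)) ⊆ U)]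
              at this
            exact h (Set.mem_singleton_iff.mp this ▸ hz1)
          rw [hsub, Set.ncard_empty] at p13
          omega
        have het : e ∈ ES T2 := by
          by_contra h
          have hsub : ES T2 \ ES T3 = ∅ := by
            apply Set.eq_empty_iff_forall_notMem.mpr
            rintro z ⟨hz2, hz3⟩
            have : z ∈ U \ ES T3 := ⟨Or.inr hz2, hz3⟩
            rw [heu, Set.diff_diff_cancel_left (by simpa using heU : ({e} : Set (Sym2 V)) ⊆ U)]
              at this
            exact h (Set.mem_singleton_iff.mp this ▸ hz2)
          rw [hsub, Set.ncard_empty] at p23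
          omega
        rcases aux_tri p13 q1 q3' with h1 | h1
        swap
        · exact h1.trans (Set.union_subset Set.subset_union_left hU)
        rcases aux_tri p12 q1 q2' with h2 | h2
        swap
        · exact h2
        have hssub : ES T1 ⊆ ES T := by
          intro z hz
          by_cases hz3 : z ∈ ES T3
          · exact h1 ⟨hz, hz3⟩
          · have hze : z ∈ U \ ES T3 := ⟨Or.inl hz, hz3⟩
            rw [heu, Set.diff_diff_cancel_left (by simpa using heU : ({e} : Set (Sym2 V)) ⊆ U)]
              at hze
            exact h2 ⟨hz, Set.mem_singleton_iff.mp hze ▸ het⟩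
        have heq := Set.eq_of_subset_of_ncard_le hssub (le_of_eq (hcard T T1)) (hfin T)
        rw [← heq]
        exact Set.subset_union_left
  have hSsub : S ⊆ M₀ := hM₀key S hS hT1 hT2 hT3
  refine ⟨M₀, ⟨hSsub, hM₀clique, ?_⟩, ?_⟩
  · intro M' hM' hss
    exact hss.not_subset
      (hM₀key M' hM' (hss.subset (hSsub hT1)) (hss.subset (hSsub hT2)) (hss.subset (hSsub hT3)))
  · rintro M ⟨hSM, hMclique, hMmax⟩
    have hsub : M ⊆ M₀ := hM₀key M hMclique (hSM hT1) (hSM hT2) (hSM hT3)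
    by_contra hne
    exact hMmax M₀ hM₀clique (hsub.ssubset_of_ne hne)
end

section
/- Let G be a finite connected simple graph on n vertices and let E' be a minimal edge cut of G of size k, i.e., a set of k edges of G whose deletion disconnects G but such that deleting any proper subset of E' leaves G connected. Then Aux(G) contains a clique of size k, i.e., there exist k distinct spanning trees of G that are pairwise adjacent in Aux(G). -/
open SimpleGraph

private lemma deleteEdge_adj' {V : Type*} {X : SimpleGraph V} {f : Sym2 V} {x y : V} :
    (X.deleteEdges {f}).Adj x y ↔ X.Adj x y ∧ s(x, y) ≠ f := by
  simp [SimpleGraph.deleteEdges_adj]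

/-- Master decomposition lemma: if every edge of `G'` is an edge of `G''` or equals
`s(u,v)`, then reachability in `G'` decomposes. -/
private lemma reach_decomp {V : Type*} {G' G'' : SimpleGraph V} {u v : V}
    (hsub : ∀ x y, G'.Adj x y → G''.Adj x y ∨ s(x, y) = s(u, v))
    {w z : V} (h : G'.Reachable w z) :
    G''.Reachable w z ∨ (G''.Reachable w u ∧ G''.Reachable v z) ∨
      (G''.Reachable w v ∧ G''.Reachable u z) := by
  obtain ⟨p⟩ := h
  induction p with
  | nil => exact Or.inl (Reachable.refl _)
  | @cons a b c hab p ih =>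
    rcases hsub _ _ hab with h' | h'
    · rcases ih with h2 | ⟨h2, h3⟩ | ⟨h2, h3⟩
      · exact Or.inl (h'.reachable.trans h2)
      · exact Or.inr (Or.inl ⟨h'.reachable.trans h2, h3⟩)
      · exact Or.inr (Or.inr ⟨h'.reachable.trans h2, h3⟩)
    · rw [Sym2.eq_iff] at h'
      rcases h' with ⟨rfl, rfl⟩ | ⟨rfl, rfl⟩
      · rcases ih with h2 | ⟨h2, h3⟩ | ⟨h2, h3⟩
        · exact Or.inr (Or.inl ⟨Reachable.refl _, h2⟩)
        · exact Or.inr (Or.inl ⟨Reachable.refl _, h3⟩)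
        · exact Or.inl h3
      · rcases ih with h2 | ⟨h2, h3⟩ | ⟨h2, h3⟩
        · exact Or.inr (Or.inr ⟨Reachable.refl _, h2⟩)
        · exact Or.inl h3
        · exact Or.inr (Or.inr ⟨Reachable.refl _, h3⟩)

private lemma reach_splice {V : Type*} {G' G'' : SimpleGraph V} {u v : V}
    (hsub : ∀ x y, G'.Adj x y → G''.Adj x y ∨ s(x, y) = s(u, v))
    (huv : G''.Reachable u v) {w z : V} (h : G'.Reachable w z) : G''.Reachable w z := by
  rcases reach_decomp hsub h with h | ⟨h1, h2⟩ | ⟨h1, h2⟩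
  exacts [h, h1.trans (huv.trans h2), h1.trans (huv.symm.trans h2)]

private lemma sym2_finite {V : Type*} [Fintype V] : Finite (Sym2 V) := by
  exact Finite.of_surjective (fun p : V × V => s(p.1, p.2))
    (fun z => z.inductionOn fun x y => ⟨(x, y), rfl⟩)

/-- Every finite connected graph has a spanning tree. -/
private lemma exists_spanning_tree {V : Type*} [Fintype V] (G : SimpleGraph V)
    (hG : G.Connected) : ∃ T ≤ G, T.IsTree := by
  classical
  have : Finite (Sym2 V) := sym2_finite
  suffices h : ∀ n (G : SimpleGraph V), G.edgeSet.ncard ≤ n → G.Connected →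
      ∃ T ≤ G, T.IsTree from h _ G le_rfl hG
  intro n
  induction n with
  | zero =>
    intro G hle hG
    have he : G.edgeSet = ∅ := by
      have hfin := G.edgeSet.toFinite
      rw [← Set.ncard_eq_zero hfin]
      omega
    rw [SimpleGraph.edgeSet_eq_empty] at he
    exact ⟨G, le_rfl, hG, he ▸ isAcyclic_bot⟩
  | succ n ih =>
    intro G hle hG
    by_cases hac : G.IsAcyclic
    · exact ⟨G, le_rfl, hG, hac⟩
    · rw [isAcyclic_iff_forall_adj_isBridge] at hac
      push_neg at hac
      obtain ⟨x, y, hadj, hbr⟩ := hac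
      rw [isBridge_iff] at hbr
      push_neg at hbr
      have hreach : (G.deleteEdges {s(x, y)}).Reachable x y := hbr
      have hsub : ∀ p q, G.Adj p q → (G.deleteEdges {s(x, y)}).Adj p q ∨ s(p, q) = s(x, y) := by
        intro p q hpq
        by_cases heq : s(p, q) = s(x, y)
        · exact Or.inr heq
        · exact Or.inl (deleteEdge_adj'.mpr ⟨hpq, heq⟩)
      have hconn' : (G.deleteEdges {s(x, y)}).Connected := by
        rw [connected_iff]
        exact ⟨fun a b => reach_splice hsub hreach (hG.preconnected a b), hG.nonempty⟩
      have hcard : (G.deleteEdges {s(x, y)}).edgeSet.ncard ≤ n := by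
        have hmem : s(x, y) ∈ G.edgeSet := hadj
        have hfin := G.edgeSet.toFinite
        rw [G.edgeSet_deleteEdges, Set.ncard_diff_singleton_of_mem hmem]
        have hpos : 1 ≤ G.edgeSet.ncard := by
          rw [Nat.one_le_iff_ne_zero, Ne, Set.ncard_eq_zero hfin]
          intro h0
          rw [h0] at hmem
          exact hmem
        omega
      obtain ⟨T, hT, ht⟩ := ih (G.deleteEdges {s(x, y)}) hcard hconn'
      exact ⟨T, le_trans hT (G.deleteEdges_le _), ht⟩

/-- If `E'` is a minimal edge cut of size `k` of a connected graph `G`, then `Aux G`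
contains a clique of size `k`. -/
theorem stmt4 {V : Type*} [Fintype V] (G : SimpleGraph V) (hG : G.Connected)
    (E' : Set (Sym2 V)) (k : ℕ)
    (hsub : E' ⊆ G.edgeSet) (hcard : E'.ncard = k)
    (hcut : ¬ (G.deleteEdges E').Connected)
    (hmin : ∀ F ⊂ E', (G.deleteEdges F).Connected) :
    ∃ S : Finset {T : SimpleGraph V // IsSpanningTree G T},
      (Aux G).IsNClique k S := by
  classical
  have : Finite (Sym2 V) := sym2_finite
  have hne : E'.Nonempty := by
    rcases E'.eq_empty_or_nonempty with rfl | h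
    · rw [SimpleGraph.deleteEdges_empty] at hcut
      exact absurd hG hcut
    · exact h
  set H := G.deleteEdges E' with hH
  obtain ⟨e₀, he₀⟩ := hne
  induction e₀ using Sym2.ind with
  | _ u₀ v₀ =>
  have hG₀conn : (G.deleteEdges (E' \ {s(u₀, v₀)})).Connected :=
    hmin _ (Set.sdiff_singleton_ssubset.mpr he₀)
  set G₀ := G.deleteEdges (E' \ {s(u₀, v₀)}) with hG₀
  obtain ⟨T, hTle, hTtree⟩ := exists_spanning_tree G₀ hG₀conn
  have hTleG : T ≤ G := le_trans hTle (G.deleteEdges_le _)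
  have hsubG₀ : ∀ x y, G₀.Adj x y → H.Adj x y ∨ s(x, y) = s(u₀, v₀) := by
    intro x y hxy
    rw [hG₀, SimpleGraph.deleteEdges_adj] at hxy
    by_cases heq : s(x, y) = s(u₀, v₀)
    · exact Or.inr heq
    · exact Or.inl (by
        rw [hH, SimpleGraph.deleteEdges_adj]
        exact ⟨hxy.1, fun hmem => hxy.2 ⟨hmem, heq⟩⟩)
  -- u₀ and v₀ are not reachable in H
  have hnoreach : ¬ H.Reachable u₀ v₀ := by
    intro hr
    apply hcut
    rw [connected_iff]
    exact ⟨fun a b => reach_splice hsubG₀ hr (hG₀conn.preconnected a b), hG.nonempty⟩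
  -- e₀ is an edge of T
  have he₀T : s(u₀, v₀) ∈ T.edgeSet := by
    by_contra hnot
    apply hcut
    have hTH : T ≤ H := by
      intro x y hxy
      have hxy' := hTle hxy
      rw [hG₀, SimpleGraph.deleteEdges_adj] at hxy'
      rw [hH, SimpleGraph.deleteEdges_adj]
      refine ⟨hxy'.1, fun hmem => ?_⟩
      by_cases heq : s(x, y) = s(u₀, v₀)
      · exact hnot (heq ▸ (T.mem_edgeSet.mpr hxy))
      · exact hxy'.2 ⟨hmem, heq⟩
    exact hTtree.isConnected.mono hTH
  set F := T.deleteEdges {s(u₀, v₀)} with hF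
  have hFT : F ≤ T := T.deleteEdges_le _
  have hFH : F ≤ H := by
    intro x y hxy
    obtain ⟨hx1, hx2⟩ := deleteEdge_adj'.mp hxy
    have hxy' := hTle hx1
    rw [hG₀, SimpleGraph.deleteEdges_adj] at hxy'
    rw [hH, SimpleGraph.deleteEdges_adj]
    exact ⟨hxy'.1, fun hmem => hxy'.2 ⟨hmem, hx2⟩⟩
  -- every vertex is on one of the two sides of `F`
  have hsubTF : ∀ x y, T.Adj x y → F.Adj x y ∨ s(x, y) = s(u₀, v₀) := by
    intro x y hxy
    by_cases heq : s(x, y) = s(u₀, v₀)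
    · exact Or.inr heq
    · exact Or.inl (deleteEdge_adj'.mpr ⟨hxy, heq⟩)
  have hsides : ∀ w, F.Reachable w u₀ ∨ F.Reachable w v₀ := by
    intro w
    rcases reach_decomp hsubTF (hTtree.isConnected.preconnected w u₀) with h | ⟨h1, _⟩ | ⟨h1, _⟩
    · exact Or.inl h
    · exact Or.inl h1
    · exact Or.inr h1
  have toFu : ∀ x, H.Reachable x u₀ → F.Reachable x u₀ := by
    intro x hx
    rcases hsides x with h | h
    · exact h
    · exact absurd (hx.symm.trans (h.mono hFH)) hnoreach
  have toFv : ∀ x, H.Reachable x v₀ → F.Reachable x v₀ := by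
    intro x hx
    rcases hsides x with h | h
    · exact absurd ((h.mono hFH).symm.trans hx) hnoreach
    · exact h
  -- each cut edge has one endpoint on each side
  have key : ∀ e ∈ E', ∃ a b, e = s(a, b) ∧ F.Reachable a u₀ ∧ F.Reachable b v₀ ∧ a ≠ b := by
    intro e he
    induction e using Sym2.ind with
    | _ c d =>
    have hcd : c ≠ d := (G.mem_edgeSet.mp (hsub he)).ne
    have hGe : (G.deleteEdges (E' \ {s(c, d)})).Connected :=
      hmin _ (Set.sdiff_singleton_ssubset.mpr he)
    have hsubGe : ∀ x y, (G.deleteEdges (E' \ {s(c, d)})).Adj x y →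
        H.Adj x y ∨ s(x, y) = s(c, d) := by
      intro x y hxy
      rw [SimpleGraph.deleteEdges_adj] at hxy
      by_cases heq : s(x, y) = s(c, d)
      · exact Or.inr heq
      · exact Or.inl (by
          rw [hH, SimpleGraph.deleteEdges_adj]
          exact ⟨hxy.1, fun hmem => hxy.2 ⟨hmem, heq⟩⟩)
    rcases reach_decomp hsubGe (hGe.preconnected u₀ v₀) with h | ⟨h1, h2⟩ | ⟨h1, h2⟩
    · exact absurd h hnoreach
    · exact ⟨c, d, rfl, toFu c h1.symm, toFv d h2, hcd⟩
    · exact ⟨d, c, Sym2.eq_swap, toFu d h1.symm, toFv c h2, hcd.symm⟩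
  -- the edge set of trees, minus e₀
  set A := T.edgeSet \ {s(u₀, v₀)} with hAdef
  have hA : ∀ e ∈ E', e ∉ A := by
    rintro e he ⟨heT, hene⟩
    have : e ∈ G₀.edgeSet := edgeSet_subset_edgeSet.mpr hTle heT
    rw [hG₀, G.edgeSet_deleteEdges] at this
    exact this.2 ⟨he, hene⟩
  -- main construction
  have main : ∀ e ∈ E', ∃ T' : SimpleGraph V,
      IsSpanningTree G T' ∧ T'.edgeSet = insert e A := by
    intro e he
    obtain ⟨a, b, rfl, hau, hbv, hab⟩ := key e he
    set T' := fromEdgeSet (insert s(a, b) A) with hT'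
    have hedge : T'.edgeSet = insert s(a, b) A := by
      rw [hT', edgeSet_fromEdgeSet]
      refine Set.Subset.antisymm Set.diff_subset fun f hf => ⟨hf, fun hdiag => ?_⟩
      rcases hf with rfl | ⟨hfT, -⟩
      · exact hab (Sym2.mk_isDiag_iff.mp hdiag)
      · exact T.not_isDiag_of_mem_edgeSet hfT hdiag
    have hFT' : F ≤ T' := by
      intro x y hxy
      obtain ⟨hx1, hx2⟩ := deleteEdge_adj'.mp hxy
      exact (fromEdgeSet_adj _).mpr ⟨Or.inr ⟨T.mem_edgeSet.mpr hx1, hx2⟩, hx1.ne⟩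
    have habT' : T'.Adj a b := (fromEdgeSet_adj _).mpr ⟨Or.inl rfl, hab⟩
    have hT'G : T' ≤ G := by
      intro x y hxy
      obtain ⟨hx1, hx2⟩ := (fromEdgeSet_adj _).mp hxy
      rcases hx1 with heq | ⟨hfT, -⟩
      · exact G.mem_edgeSet.mp (heq ▸ hsub he)
      · exact hTleG (T.mem_edgeSet.mp hfT)
    have huv' : T'.Reachable u₀ v₀ :=
      ((hau.mono hFT').symm.trans habT'.reachable).trans (hbv.mono hFT')
    have hconn' : T'.Connected := by
      rw [connected_iff]
      refine ⟨fun w z => ?_, hG.nonempty⟩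
      rcases hsides w with hw | hw <;> rcases hsides z with hz | hz
      · exact (hw.mono hFT').trans (hz.mono hFT').symm
      · exact (hw.mono hFT').trans (huv'.trans (hz.mono hFT').symm)
      · exact (hw.mono hFT').trans (huv'.symm.trans (hz.mono hFT').symm)
      · exact (hw.mono hFT').trans (hz.mono hFT').symm
    have hacyc : T'.IsAcyclic := by
      rw [isAcyclic_iff_forall_adj_isBridge]
      intro p q hpq
      rw [isBridge_iff]
      intro hre
      have hre' : (T'.deleteEdges {s(p, q)}).Reachable p q := hre
      obtain ⟨hp1, hp2⟩ := (fromEdgeSet_adj _).mp hpq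
      rcases hp1 with heq | ⟨hmemT, hne₀⟩
      · -- the new edge: removing it separates the two sides
        have hle : T'.deleteEdges {s(p, q)} ≤ F := by
          intro x y hxy
          obtain ⟨hx1, hx2⟩ := deleteEdge_adj'.mp hxy
          obtain ⟨hx3, -⟩ := (fromEdgeSet_adj _).mp hx1
          rcases hx3 with h3 | ⟨h3, h4⟩
          · exact absurd (h3.trans heq.symm) hx2
          · exact deleteEdge_adj'.mpr ⟨T.mem_edgeSet.mp h3, h4⟩
        have hHre : H.Reachable p q := (hre'.mono hle).mono hFH
        rcases Sym2.eq_iff.mp heq with ⟨rfl, rfl⟩ | ⟨rfl, rfl⟩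
        · exact hnoreach (((hau.mono hFH).symm.trans hHre).trans (hbv.mono hFH))
        · exact hnoreach (((hau.mono hFH).symm.trans hHre.symm).trans (hbv.mono hFH))
      · -- an old tree edge
        have hne₀' : s(p, q) ≠ s(u₀, v₀) := by
          intro h; exact hne₀ (by rw [h]; rfl)
        have hbrT : ¬ (T.deleteEdges {s(p, q)}).Reachable p q := by
          have hb := (isAcyclic_iff_forall_adj_isBridge.mp hTtree.IsAcyclic)
            (T.mem_edgeSet.mp hmemT)
          rw [isBridge_iff] at hb
          exact hb
        have hsubd : ∀ x y, (T'.deleteEdges {s(p, q)}).Adj x y →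
            (F.deleteEdges {s(p, q)}).Adj x y ∨ s(x, y) = s(a, b) := by
          intro x y hxy
          obtain ⟨hx1, hx2⟩ := deleteEdge_adj'.mp hxy
          obtain ⟨hx3, -⟩ := (fromEdgeSet_adj _).mp hx1
          rcases hx3 with h3 | ⟨h3, h4⟩
          · exact Or.inr h3
          · exact Or.inl (deleteEdge_adj'.mpr
              ⟨deleteEdge_adj'.mpr ⟨T.mem_edgeSet.mp h3, h4⟩, hx2⟩)
        have hFdF : F.deleteEdges {s(p, q)} ≤ F := F.deleteEdges_le _
        have hpqF : F.Adj p q := deleteEdge_adj'.mpr ⟨T.mem_edgeSet.mp hmemT, hne₀'⟩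
        rcases reach_decomp hsubd hre' with h | ⟨h1, h2⟩ | ⟨h1, h2⟩
        · refine hbrT (h.mono ?_)
          intro x y hxy
          obtain ⟨hx1, hx2⟩ := deleteEdge_adj'.mp hxy
          exact deleteEdge_adj'.mpr ⟨(deleteEdge_adj'.mp hx1).1, hx2⟩
        · have hpH : H.Reachable p u₀ := ((h1.mono hFdF).mono hFH).trans (hau.mono hFH)
          have hqH : H.Reachable q v₀ := ((h2.mono hFdF).mono hFH).symm.trans (hbv.mono hFH)
          exact hnoreach ((hpH.symm.trans (hpqF.reachable.mono hFH)).trans hqH)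
        · have hpH : H.Reachable p v₀ := ((h1.mono hFdF).mono hFH).trans (hbv.mono hFH)
          have hqH : H.Reachable q u₀ := ((h2.mono hFdF).mono hFH).symm.trans (hau.mono hFH)
          exact hnoreach ((hqH.symm.trans ((hpqF.reachable.mono hFH).symm)).trans hpH)
    exact ⟨T', ⟨hT'G, ⟨hconn', hacyc⟩⟩, hedge⟩
  choose φ hφ1 hφ2 using main
  have hEfin : E'.Finite := E'.toFinite
  -- the clique
  refine ⟨hEfin.toFinset.attach.image
    (fun x => ⟨φ x.1 (hEfin.mem_toFinset.mp x.2), hφ1 x.1 (hEfin.mem_toFinset.mp x.2)⟩), ?_, ?_⟩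
  · -- clique property
    rintro x hx y hy hxy
    simp only [Finset.coe_image, Set.mem_image, Finset.mem_coe, Finset.mem_attach,
      true_and] at hx hy
    obtain ⟨⟨e, hes⟩, -, rfl⟩ := hx
    obtain ⟨⟨e', hes'⟩, -, rfl⟩ := hy
    have he : e ∈ E' := hEfin.mem_toFinset.mp hes
    have he' : e' ∈ E' := hEfin.mem_toFinset.mp hes'
    have hee' : e ≠ e' := by
      rintro rfl
      exact hxy (Subtype.ext rfl)
    change Set.ncard (symmDiff (φ e he).edgeSet (φ e' he').edgeSet) = 2
    rw [hφ2 e he, hφ2 e' he']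
    have hsd : symmDiff (insert e A) (insert e' A) = {e, e'} := by
      have hxA := hA e he
      have hyA := hA e' he'
      ext f
      simp only [Set.mem_symmDiff, Set.mem_insert_iff, Set.mem_singleton_iff]
      constructor
      · rintro (⟨rfl | hf, h2⟩ | ⟨rfl | hf, h2⟩)
        · exact Or.inl rfl
        · exact absurd (Or.inr hf) h2
        · exact Or.inr rfl
        · exact absurd (Or.inr hf) h2
      · rintro (rfl | rfl)
        · exact Or.inl ⟨Or.inl rfl, by rintro (rfl | hf); exacts [hee' rfl, hxA hf]⟩
        · exact Or.inr ⟨Or.inl rfl, by rintro (h | hf); exacts [hee' h.symm, hyA hf]⟩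
    rw [hsd]
    exact Set.ncard_pair hee'
  · -- cardinality
    rw [Finset.card_image_of_injective]
    · rw [Finset.card_attach, ← hcard, Set.ncard_eq_toFinset_card E' hEfin]
    · rintro ⟨e, hes⟩ ⟨e', hes'⟩ hEq
      have he : e ∈ E' := hEfin.mem_toFinset.mp hes
      have he' : e' ∈ E' := hEfin.mem_toFinset.mp hes'
      have hEq' : (φ e he).edgeSet = (φ e' he').edgeSet :=
        congrArg (fun z : {T : SimpleGraph V // IsSpanningTree G T} => z.1.edgeSet) hEq
      rw [hφ2 e he, hφ2 e' he'] at hEq'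
      have hmem : e ∈ insert e' A := hEq' ▸ Set.mem_insert e A
      rcases Set.mem_insert_iff.mp hmem with h | h
      · exact Subtype.ext h
      · exact absurd h (hA e he)
end

section
/- Let G be a finite connected simple graph on vertex set V, and suppose V = V1 ∪ V2 where V1 ∩ V2 = {v} for a single vertex v, and every edge of G has both endpoints in V1 or both endpoints in V2. Let G1 and G2 be the induced subgraphs of G on V1 and V2 respectively. Then Aux(G) is isomorphic to the box (cartesian) product Aux(G1) □ Aux(G2). -/
open SimpleGraph

namespace Stmt5Aux

variable {V : Type*}

/-- Lift a walk whose support lies in `s` to the induced subgraph on `s`. -/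
def liftWalk {H : SimpleGraph V} {s : Set V} :
    ∀ {x y : V} (w : H.Walk x y) (hx : x ∈ s) (hy : y ∈ s),
      (∀ z ∈ w.support, z ∈ s) → (H.induce s).Walk ⟨x, hx⟩ ⟨y, hy⟩
  | _, _, .nil, _, _, _ => .nil
  | _, _, .cons (v := b) ha w, hx, hy, h =>
      .cons (by exact ha)
        (liftWalk w (h b (by simp)) hy (fun z hz => h z (by simp [hz])))

theorem support_liftWalk {H : SimpleGraph V} {s : Set V} :
    ∀ {x y : V} (w : H.Walk x y) (hx : x ∈ s) (hy : y ∈ s)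
      (h : ∀ z ∈ w.support, z ∈ s),
      (liftWalk w hx hy h).support.map Subtype.val = w.support
  | _, _, .nil, _, _, _ => rfl
  | _, _, .cons _ w, hx, hy, h => by
      exact congrArg (List.cons _) (support_liftWalk w _ _ _)

theorem edges_liftWalk {H : SimpleGraph V} {s : Set V} :
    ∀ {x y : V} (w : H.Walk x y) (hx : x ∈ s) (hy : y ∈ s)
      (h : ∀ z ∈ w.support, z ∈ s),
      (liftWalk w hx hy h).edges.map (Sym2.map Subtype.val) = w.edges
  | _, _, .nil, _, _, _ => rfl
  | _, _, .cons _ w, hx, hy, h => by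
      exact congrArg (List.cons _) (edges_liftWalk w _ _ _)

theorem length_liftWalk {H : SimpleGraph V} {s : Set V} :
    ∀ {x y : V} (w : H.Walk x y) (hx : x ∈ s) (hy : y ∈ s)
      (h : ∀ z ∈ w.support, z ∈ s),
      (liftWalk w hx hy h).length = w.length
  | _, _, .nil, _, _, _ => rfl
  | _, _, .cons _ w, hx, hy, h => by
      exact congrArg (· + 1) (length_liftWalk w _ _ _)

theorem reachable_of_liftable {H : SimpleGraph V} {s : Set V} {x y : V}
    (w : H.Walk x y) (hx : x ∈ s) (hy : y ∈ s) (h : ∀ z ∈ w.support, z ∈ s) :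
    (H.induce s).Reachable ⟨x, hx⟩ ⟨y, hy⟩ :=
  ⟨liftWalk w hx hy h⟩

theorem isCycle_liftWalk {H : SimpleGraph V} {s : Set V} {x : V}
    (w : H.Walk x x) (hx : x ∈ s) (h : ∀ z ∈ w.support, z ∈ s)
    (hw : w.IsCycle) : (liftWalk w hx hx h).IsCycle := by
  have hs := support_liftWalk w hx hx h
  have he := edges_liftWalk w hx hx h
  have hl := length_liftWalk w hx hx h
  rw [Walk.isCycle_def] at hw ⊢
  refine ⟨?_, ?_, ?_⟩
  · rw [Walk.isTrail_def] at hw ⊢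
    have := hw.1
    rw [← he] at this
    exact this.of_map
  · intro hnil
    rw [hnil] at hl
    simp at hl
    exact hw.2.1 (by
      cases w with
      | nil => rfl
      | cons h p => simp at hl)
  · have := hw.2.2
    rw [← hs, ← List.map_tail] at this
    exact this.of_map

section Decomp

variable {G : SimpleGraph V} {V₁ V₂ : Set V} {v : V}

/-- Every walk from outside `V₁` into `V₁` passes through the cut vertex `v`. -/
theorem crossing {H : SimpleGraph V}
    (hH : ∀ x y : V, H.Adj x y → (x ∈ V₁ ∧ y ∈ V₁) ∨ (x ∈ V₂ ∧ y ∈ V₂))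
    (hsingle : ∀ x : V, x ∈ V₁ → x ∈ V₂ → x = v) :
    ∀ {x y : V} (w : H.Walk x y), x ∉ V₁ → y ∈ V₁ → v ∈ w.support := by
  intro x y w
  induction w with
  | nil => intro hx hy; exact absurd hy hx
  | @cons x b y ha w ih =>
    intro hx hy
    rcases hH _ _ ha with ⟨h1, _⟩ | ⟨_, hb2⟩
    · exact absurd h1 hx
    · by_cases hb1 : b ∈ V₁
      · have : b = v := hsingle b hb1 hb2
        subst this
        simp [Walk.support_cons]
      · have := ih hb1 hy
        simp [Walk.support_cons, this]

/-- The support of a path between two vertices of `V₁` stays in `V₁`. -/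
theorem path_support {H : SimpleGraph V}
    (hH : ∀ x y : V, H.Adj x y → (x ∈ V₁ ∧ y ∈ V₁) ∨ (x ∈ V₂ ∧ y ∈ V₂))
    (hsingle : ∀ x : V, x ∈ V₁ → x ∈ V₂ → x = v) :
    ∀ {x y : V} (w : H.Walk x y), w.IsPath → x ∈ V₁ → y ∈ V₁ →
      ∀ z ∈ w.support, z ∈ V₁ := by
  intro x y w
  induction w with
  | nil =>
    intro _ hx _ z hz
    simp only [Walk.support_nil, List.mem_singleton] at hz
    subst hz; exact hx
  | @cons x b y ha w ih =>
    intro hp hx hy z hz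
    rw [Walk.cons_isPath_iff] at hp
    simp only [Walk.support_cons, List.mem_cons] at hz
    rcases hz with rfl | hz
    · exact hx
    rcases hH _ _ ha with ⟨_, hb1⟩ | ⟨hx2, hb2⟩
    · exact ih hp.1 hb1 hy z hz
    · by_cases hb1 : b ∈ V₁
      · exact ih hp.1 hb1 hy z hz
      · have hxv : x = v := hsingle x hx hx2
        subst hxv
        exact absurd (crossing hH hsingle w hb1 hy) hp.2

/-- The support of a cycle stays in `V₁` or stays in `V₂`. -/
theorem cycle_side {H : SimpleGraph V}
    (hH : ∀ x y : V, H.Adj x y → (x ∈ V₁ ∧ y ∈ V₁) ∨ (x ∈ V₂ ∧ y ∈ V₂))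
    (hsingle : ∀ x : V, x ∈ V₁ → x ∈ V₂ → x = v)
    (hunion : V₁ ∪ V₂ = Set.univ)
    (hv₁ : v ∈ V₁) (hv₂ : v ∈ V₂)
    {a : V} (c : H.Walk a a) (hc : c.IsCycle) :
    (∀ z ∈ c.support, z ∈ V₁) ∨ (∀ z ∈ c.support, z ∈ V₂) := by
  classical
  by_contra hcon
  push_neg at hcon
  obtain ⟨⟨x, hxs, hx1⟩, ⟨y, hys, hy2⟩⟩ := hcon
  have hmem : ∀ z : V, z ∈ V₁ ∪ V₂ := fun z => hunion ▸ Set.mem_univ z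
  have hy1 : y ∈ V₁ := (hmem y).resolve_right hy2
  set c' := c.rotate x hxs with hc'def
  have hc' := hc.rotate hxs
  have hy' : y ∈ c'.support := by
    have h1 : y ∈ (c.takeUntil x hxs).support ∨ y ∈ (c.dropUntil x hxs).support := by
      rw [← Walk.mem_support_append_iff, c.take_spec hxs]; exact hys
    rw [hc'def, Walk.rotate, Walk.mem_support_append_iff]
    tauto
  have hv1 : v ∈ (c'.takeUntil y hy').support :=
    crossing hH hsingle _ hx1 hy1
  have hv2 : v ∈ (c'.dropUntil y hy').support := by
    have := crossing hH hsingle (c'.dropUntil y hy').reverse hx1 hy1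
    simpa [Walk.support_reverse] using this
  have hvx : v ≠ x := fun h => hx1 (h ▸ hv₁)
  have hvy : v ≠ y := fun h => hy2 (h ▸ hv₂)
  have hv1' : v ∈ (c'.takeUntil y hy').support.tail := by
    rw [(c'.takeUntil y hy').support_eq_cons, List.mem_cons] at hv1
    exact hv1.resolve_left hvx
  have hv2' : v ∈ (c'.dropUntil y hy').support.tail := by
    rw [(c'.dropUntil y hy').support_eq_cons, List.mem_cons] at hv2
    exact hv2.resolve_left hvy
  have hnd : c'.support.tail.Nodup := (Walk.isCycle_def _ |>.mp hc').2.2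
  have hsup : c'.support.tail =
      (c'.takeUntil y hy').support.tail ++ (c'.dropUntil y hy').support.tail := by
    conv_lhs => rw [← c'.take_spec hy']
    rw [Walk.tail_support_append]
  rw [hsup, List.nodup_append] at hnd
  exact hnd.2.2 v hv1' v hv2' rfl

/-- Glue two graphs on `V₁` and `V₂` into one graph on `V`. -/
def Glue (V₁ V₂ : Set V) (T₁ : SimpleGraph V₁) (T₂ : SimpleGraph V₂) :
    SimpleGraph V where
  Adj x y := (∃ (hx : x ∈ V₁) (hy : y ∈ V₁), T₁.Adj ⟨x, hx⟩ ⟨y, hy⟩) ∨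
             (∃ (hx : x ∈ V₂) (hy : y ∈ V₂), T₂.Adj ⟨x, hx⟩ ⟨y, hy⟩)
  symm := by
    constructor
    rintro x y (⟨hx, hy, h⟩ | ⟨hx, hy, h⟩)
    · exact Or.inl ⟨hy, hx, h.symm⟩
    · exact Or.inr ⟨hy, hx, h.symm⟩
  loopless := by
    constructor
    rintro x (⟨hx, hy, h⟩ | ⟨hx, hy, h⟩) <;> exact h.ne (by rfl)

theorem glue_adj {T₁ : SimpleGraph V₁} {T₂ : SimpleGraph V₂} {x y : V} :
    (Glue V₁ V₂ T₁ T₂).Adj x y ↔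
      (∃ (hx : x ∈ V₁) (hy : y ∈ V₁), T₁.Adj ⟨x, hx⟩ ⟨y, hy⟩) ∨
      (∃ (hx : x ∈ V₂) (hy : y ∈ V₂), T₂.Adj ⟨x, hx⟩ ⟨y, hy⟩) := Iff.rfl

theorem mem_image_edge {s : Set V} (T : SimpleGraph s) (x y : V) :
    s(x, y) ∈ Sym2.map Subtype.val '' T.edgeSet ↔
      ∃ (hx : x ∈ s) (hy : y ∈ s), T.Adj ⟨x, hx⟩ ⟨y, hy⟩ := by
  constructor
  · rintro ⟨e, he, hmap⟩
    revert he hmap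
    refine Sym2.ind (fun a b he hmap => ?_) e
    rw [Sym2.map_pair_eq, Sym2.eq_iff] at hmap
    rcases hmap with ⟨hax, hby⟩ | ⟨hay, hbx⟩
    · subst hax; subst hby
      exact ⟨a.2, b.2, he⟩
    · subst hay; subst hbx
      exact ⟨b.2, a.2, he.symm⟩
  · rintro ⟨hx, hy, h⟩
    exact ⟨s(⟨x, hx⟩, ⟨y, hy⟩), h, rfl⟩

theorem glue_edgeSet (T₁ : SimpleGraph V₁) (T₂ : SimpleGraph V₂) :
    (Glue V₁ V₂ T₁ T₂).edgeSet =
      Sym2.map Subtype.val '' T₁.edgeSet ∪ Sym2.map Subtype.val '' T₂.edgeSet := by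
  ext e
  refine Sym2.ind (fun x y => ?_) e
  rw [mem_edgeSet, glue_adj, Set.mem_union, mem_image_edge, mem_image_edge]

theorem disj_images (hsingle : ∀ x : V, x ∈ V₁ → x ∈ V₂ → x = v)
    (T₁ : SimpleGraph V₁) (T₂ : SimpleGraph V₂)
    {A : Set (Sym2 V₁)} {B : Set (Sym2 V₂)}
    (hA : A ⊆ T₁.edgeSet) (hB : B ⊆ T₂.edgeSet) :
    Disjoint (Sym2.map Subtype.val '' A) (Sym2.map Subtype.val '' B) := by
  rw [Set.disjoint_left]
  intro e h1 h2
  have h1' : e ∈ Sym2.map Subtype.val '' T₁.edgeSet := Set.image_mono hA h1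
  have h2' : e ∈ Sym2.map Subtype.val '' T₂.edgeSet := Set.image_mono hB h2
  revert h1' h2'
  refine Sym2.ind (fun x y h1' h2' => ?_) e
  rw [mem_image_edge] at h1' h2'
  obtain ⟨hx1, hy1, ha1⟩ := h1'
  obtain ⟨hx2, hy2, ha2⟩ := h2'
  have hxv : x = v := hsingle x hx1 hx2
  have hyv : y = v := hsingle y hy1 hy2
  exact ha1.ne (Subtype.ext (hxv.trans hyv.symm))

/-- Restricting a spanning tree of `G` to `V₁` gives a spanning tree of `G.induce V₁`. -/
theorem restrict_spanning
    (hedge : ∀ x y : V, G.Adj x y → (x ∈ V₁ ∧ y ∈ V₁) ∨ (x ∈ V₂ ∧ y ∈ V₂))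
    (hsingle : ∀ x : V, x ∈ V₁ → x ∈ V₂ → x = v) (hv₁ : v ∈ V₁)
    {T : SimpleGraph V} (hT : IsSpanningTree G T) :
    IsSpanningTree (G.induce V₁) (T.induce V₁) := by
  classical
  have hTedge : ∀ x y : V, T.Adj x y → (x ∈ V₁ ∧ y ∈ V₁) ∨ (x ∈ V₂ ∧ y ∈ V₂) :=
    fun x y h => hedge x y (hT.1 h)
  refine ⟨fun {a b} h => hT.1 h, ?_, ?_⟩
  · haveI : Nonempty ↥V₁ := ⟨⟨v, hv₁⟩⟩
    constructor
    intro a b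
    · obtain ⟨w⟩ := hT.2.isConnected.preconnected a.1 b.1
      have hp := w.bypass_isPath
      have hsup : ∀ z ∈ w.bypass.support, z ∈ V₁ :=
        path_support hTedge hsingle w.bypass hp a.2 b.2
      have := reachable_of_liftable w.bypass a.2 b.2 hsup
      simpa using this
  · intro a c hc
    have hc' : (c.map (SimpleGraph.Embedding.induce V₁ (G := T)).toHom).IsCycle :=
      hc.map Subtype.val_injective
    exact hT.2.IsAcyclic _ hc'

/-- Gluing spanning trees of the parts gives a spanning tree of `G`. -/
theorem glue_spanning
    (hedge : ∀ x y : V, G.Adj x y → (x ∈ V₁ ∧ y ∈ V₁) ∨ (x ∈ V₂ ∧ y ∈ V₂))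
    (hsingle : ∀ x : V, x ∈ V₁ → x ∈ V₂ → x = v)
    (hunion : V₁ ∪ V₂ = Set.univ) (hv₁ : v ∈ V₁) (hv₂ : v ∈ V₂)
    {T₁ : SimpleGraph V₁} {T₂ : SimpleGraph V₂}
    (hT₁ : IsSpanningTree (G.induce V₁) T₁) (hT₂ : IsSpanningTree (G.induce V₂) T₂) :
    IsSpanningTree G (Glue V₁ V₂ T₁ T₂) := by
  have hmem : ∀ z : V, z ∈ V₁ ∪ V₂ := fun z => hunion ▸ Set.mem_univ z
  have hGlueEdge : ∀ x y : V, (Glue V₁ V₂ T₁ T₂).Adj x y →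
      (x ∈ V₁ ∧ y ∈ V₁) ∨ (x ∈ V₂ ∧ y ∈ V₂) := by
    rintro x y (⟨hx, hy, _⟩ | ⟨hx, hy, _⟩)
    · exact Or.inl ⟨hx, hy⟩
    · exact Or.inr ⟨hx, hy⟩
  haveI : Nonempty V := ⟨v⟩
  let hom₁ : T₁ →g Glue V₁ V₂ T₁ T₂ :=
    ⟨Subtype.val, fun h => Or.inl ⟨_, _, h⟩⟩
  let hom₂ : T₂ →g Glue V₁ V₂ T₁ T₂ :=
    ⟨Subtype.val, fun h => Or.inr ⟨_, _, h⟩⟩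
  have hreach : ∀ x : V, (Glue V₁ V₂ T₁ T₂).Reachable x v := by
    intro x
    rcases hmem x with hx | hx
    · exact (hT₁.2.isConnected.preconnected ⟨x, hx⟩ ⟨v, hv₁⟩).map hom₁
    · exact (hT₂.2.isConnected.preconnected ⟨x, hx⟩ ⟨v, hv₂⟩).map hom₂
  refine ⟨?_, ?_, ?_⟩
  · rintro x y (⟨hx, hy, h⟩ | ⟨hx, hy, h⟩)
    · exact hT₁.1 h
    · exact hT₂.1 h
  · exact ⟨fun x y => (hreach x).trans (hreach y).symm⟩
  · intro a c hc
    have heq₁ : (Glue V₁ V₂ T₁ T₂).induce V₁ = T₁ := by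
      ext ⟨x, hx⟩ ⟨y, hy⟩
      constructor
      · rintro (⟨hx', hy', h⟩ | ⟨hx2, hy2, h⟩)
        · exact h
        · exact absurd (Subtype.ext ((hsingle x hx hx2).trans (hsingle y hy hy2).symm) :
            (⟨x, hx2⟩ : V₂) = ⟨y, hy2⟩) h.ne
      · intro h
        exact Or.inl ⟨hx, hy, h⟩
    have heq₂ : (Glue V₁ V₂ T₁ T₂).induce V₂ = T₂ := by
      ext ⟨x, hx⟩ ⟨y, hy⟩
      constructor
      · rintro (⟨hx1, hy1, h⟩ | ⟨hx', hy', h⟩)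
        · exact absurd (Subtype.ext ((hsingle x hx1 hx).trans (hsingle y hy1 hy).symm) :
            (⟨x, hx1⟩ : V₁) = ⟨y, hy1⟩) h.ne
        · exact h
      · intro h
        exact Or.inr ⟨hx, hy, h⟩
    rcases cycle_side hGlueEdge hsingle hunion hv₁ hv₂ c hc with hside | hside
    · have hac : ((Glue V₁ V₂ T₁ T₂).induce V₁).IsAcyclic := by
        rw [heq₁]; exact hT₁.2.IsAcyclic
      exact hac (liftWalk c (hside a (Walk.start_mem_support c)) _ hside)
        (isCycle_liftWalk c _ hside hc)
    · have hac : ((Glue V₁ V₂ T₁ T₂).induce V₂).IsAcyclic := by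
        rw [heq₂]; exact hT₂.2.IsAcyclic
      exact hac (liftWalk c (hside a (Walk.start_mem_support c)) _ hside)
        (isCycle_liftWalk c _ hside hc)

theorem induce_glue₁ (hsingle : ∀ x : V, x ∈ V₁ → x ∈ V₂ → x = v)
    {T₁ : SimpleGraph V₁} {T₂ : SimpleGraph V₂} :
    (Glue V₁ V₂ T₁ T₂).induce V₁ = T₁ := by
  ext ⟨x, hx⟩ ⟨y, hy⟩
  constructor
  · rintro (⟨hx', hy', h⟩ | ⟨hx2, hy2, h⟩)
    · exact h
    · exact absurd (Subtype.ext ((hsingle x hx hx2).trans (hsingle y hy hy2).symm) :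
        (⟨x, hx2⟩ : V₂) = ⟨y, hy2⟩) h.ne
  · intro h
    exact Or.inl ⟨hx, hy, h⟩

theorem induce_glue₂ (hsingle : ∀ x : V, x ∈ V₁ → x ∈ V₂ → x = v)
    {T₁ : SimpleGraph V₁} {T₂ : SimpleGraph V₂} :
    (Glue V₁ V₂ T₁ T₂).induce V₂ = T₂ := by
  ext ⟨x, hx⟩ ⟨y, hy⟩
  constructor
  · rintro (⟨hx1, hy1, h⟩ | ⟨hx', hy', h⟩)
    · exact absurd (Subtype.ext ((hsingle x hx1 hx).trans (hsingle y hy1 hy).symm) :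
        (⟨x, hx1⟩ : V₁) = ⟨y, hy1⟩) h.ne
    · exact h
  · intro h
    exact Or.inr ⟨hx, hy, h⟩

theorem glue_restrict
    (hedge : ∀ x y : V, G.Adj x y → (x ∈ V₁ ∧ y ∈ V₁) ∨ (x ∈ V₂ ∧ y ∈ V₂))
    {T : SimpleGraph V} (hle : T ≤ G) :
    Glue V₁ V₂ (T.induce V₁) (T.induce V₂) = T := by
  ext x y
  constructor
  · rintro (⟨hx, hy, h⟩ | ⟨hx, hy, h⟩) <;> exact h
  · intro h
    rcases hedge x y (hle h) with ⟨hx, hy⟩ | ⟨hx, hy⟩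
    · exact Or.inl ⟨hx, hy, h⟩
    · exact Or.inr ⟨hx, hy, h⟩

end Decomp

/-- Edge count of a finite tree. -/
theorem tree_edge_ncard {W : Type*} [Finite W] {T : SimpleGraph W} (hT : T.IsTree) :
    T.edgeSet.ncard + 1 = Nat.card W := by
  classical
  haveI : Fintype W := Fintype.ofFinite W
  haveI : Fintype T.edgeSet := Set.Finite.fintype (Set.toFinite _)
  rw [Set.ncard_eq_toFinset_card', Nat.card_eq_fintype_card]
  exact hT.card_edgeFinset

/-- The symmetric difference of two equicardinal finite sets has even cardinality. -/
theorem even_ncard_symmDiff {α : Type*} {A B : Set α} (hA : A.Finite) (hB : B.Finite)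
    (hcard : A.ncard = B.ncard) : Even ((symmDiff A B).ncard) := by
  have h1 := Set.ncard_inter_add_ncard_diff_eq_ncard A B hA
  have h2 := Set.ncard_inter_add_ncard_diff_eq_ncard B A hB
  rw [Set.inter_comm B A] at h2
  have hdd : (A \ B).ncard = (B \ A).ncard := by omega
  have hsd : symmDiff A B = (A \ B) ∪ (B \ A) := Set.symmDiff_def A B
  rw [hsd, Set.ncard_union_eq disjoint_sdiff_sdiff hA.diff hB.diff, hdd]
  exact ⟨(B \ A).ncard, rfl⟩

theorem symmDiff_union_split {α : Type*} {A₁ A₂ B₁ B₂ : Set α}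
    (h12 : Disjoint A₁ B₂) (h21 : Disjoint A₂ B₁)
    (hAA : Disjoint A₁ A₂) (hBB : Disjoint B₁ B₂) :
    symmDiff (A₁ ∪ A₂) (B₁ ∪ B₂) = symmDiff A₁ B₁ ∪ symmDiff A₂ B₂ := by
  rw [Set.disjoint_left] at h12 h21 hAA hBB
  ext x
  have h12' : x ∈ A₁ → x ∉ B₂ := fun h => h12 h
  have h21' : x ∈ A₂ → x ∉ B₁ := fun h => h21 h
  have hAA' : x ∈ A₁ → x ∉ A₂ := fun h => hAA h
  have hBB' : x ∈ B₁ → x ∉ B₂ := fun h => hBB h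
  simp only [Set.mem_symmDiff, Set.mem_union]
  tauto

end Stmt5Aux

/-- If a connected graph `G` decomposes into two parts `V₁`, `V₂` sharing exactly one
vertex `v`, with every edge inside one of the parts, then `Aux G` is isomorphic to the
box product of the auxiliary graphs of the two induced parts. -/
theorem stmt5 {V : Type*} [Fintype V] (G : SimpleGraph V) (hG : G.Connected)
    (V₁ V₂ : Set V) (v : V)
    (hunion : V₁ ∪ V₂ = Set.univ)
    (hinter : V₁ ∩ V₂ = {v})
    (hedge : ∀ x y : V, G.Adj x y → (x ∈ V₁ ∧ y ∈ V₁) ∨ (x ∈ V₂ ∧ y ∈ V₂)) :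
    Nonempty (Aux G ≃g (Aux (G.induce V₁)) □ (Aux (G.induce V₂))) := by
  classical
  have hv₁ : v ∈ V₁ := by
    have : v ∈ V₁ ∩ V₂ := by rw [hinter]; rfl
    exact this.1
  have hv₂ : v ∈ V₂ := by
    have : v ∈ V₁ ∩ V₂ := by rw [hinter]; rfl
    exact this.2
  have hsingle : ∀ x : V, x ∈ V₁ → x ∈ V₂ → x = v := by
    intro x h1 h2
    have : x ∈ V₁ ∩ V₂ := ⟨h1, h2⟩
    rwa [hinter, Set.mem_singleton_iff] at this
  have hedge' : ∀ x y : V, G.Adj x y → (x ∈ V₂ ∧ y ∈ V₂) ∨ (x ∈ V₁ ∧ y ∈ V₁) :=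
    fun x y h => (hedge x y h).symm
  have hsingle' : ∀ x : V, x ∈ V₂ → x ∈ V₁ → x = v := fun x h2 h1 => hsingle x h1 h2
  have inj : Function.Injective (Sym2.map (Subtype.val : V₁ → V)) :=
    Sym2.map.injective Subtype.val_injective
  have inj' : Function.Injective (Sym2.map (Subtype.val : V₂ → V)) :=
    Sym2.map.injective Subtype.val_injective
  -- the key numerical fact
  have key : ∀ T T' : SimpleGraph V, IsSpanningTree G T → IsSpanningTree G T' →
      ((symmDiff T.edgeSet T'.edgeSet).ncard = 2 ↔
        ((symmDiff (T.induce V₁).edgeSet (T'.induce V₁).edgeSet).ncard = 2 ∧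
            T.induce V₂ = T'.induce V₂) ∨
        ((symmDiff (T.induce V₂).edgeSet (T'.induce V₂).edgeSet).ncard = 2 ∧
            T.induce V₁ = T'.induce V₁)) := by
    intro T T' hT hT'
    set A₁ := (T.induce V₁).edgeSet with hA₁
    set A₂ := (T.induce V₂).edgeSet with hA₂
    set B₁ := (T'.induce V₁).edgeSet with hB₁
    set B₂ := (T'.induce V₂).edgeSet with hB₂
    have hTsplit : T.edgeSet = Sym2.map Subtype.val '' A₁ ∪ Sym2.map Subtype.val '' A₂ := by
      conv_lhs => rw [← Stmt5Aux.glue_restrict hedge hT.1]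
      rw [Stmt5Aux.glue_edgeSet]
    have hT'split : T'.edgeSet = Sym2.map Subtype.val '' B₁ ∪ Sym2.map Subtype.val '' B₂ := by
      conv_lhs => rw [← Stmt5Aux.glue_restrict hedge hT'.1]
      rw [Stmt5Aux.glue_edgeSet]
    have h12 : Disjoint (Sym2.map Subtype.val '' A₁) (Sym2.map Subtype.val '' B₂) :=
      Stmt5Aux.disj_images hsingle _ _ subset_rfl subset_rfl
    have h21 : Disjoint (Sym2.map Subtype.val '' A₂) (Sym2.map Subtype.val '' B₁) :=
      (Stmt5Aux.disj_images hsingle _ _ subset_rfl subset_rfl).symm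
    have hAA : Disjoint (Sym2.map Subtype.val '' A₁) (Sym2.map Subtype.val '' A₂) :=
      Stmt5Aux.disj_images hsingle _ _ subset_rfl subset_rfl
    have hBB : Disjoint (Sym2.map Subtype.val '' B₁) (Sym2.map Subtype.val '' B₂) :=
      Stmt5Aux.disj_images hsingle _ _ subset_rfl subset_rfl
    have hbig : Disjoint (Sym2.map Subtype.val '' A₁ ∪ Sym2.map Subtype.val '' B₁)
        (Sym2.map Subtype.val '' A₂ ∪ Sym2.map Subtype.val '' B₂) := by
      rw [Set.disjoint_union_left, Set.disjoint_union_right, Set.disjoint_union_right]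
      exact ⟨⟨hAA, h12⟩, ⟨h21.symm, hBB⟩⟩
    have hdisj : Disjoint (symmDiff (Sym2.map Subtype.val '' A₁) (Sym2.map Subtype.val '' B₁))
        (symmDiff (Sym2.map Subtype.val '' A₂) (Sym2.map Subtype.val '' B₂)) :=
      hbig.mono Set.symmDiff_subset_union Set.symmDiff_subset_union
    have hsplit : (symmDiff T.edgeSet T'.edgeSet).ncard =
        (symmDiff A₁ B₁).ncard + (symmDiff A₂ B₂).ncard := by
      rw [hTsplit, hT'split, Stmt5Aux.symmDiff_union_split h12 h21 hAA hBB,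
        Set.ncard_union_eq hdisj (Set.toFinite _) (Set.toFinite _),
        ← Set.image_symmDiff inj, ← Set.image_symmDiff inj',
        Set.ncard_image_of_injective _ inj, Set.ncard_image_of_injective _ inj']
    -- cardinalities of tree edge sets agree
    have htree₁ := (Stmt5Aux.restrict_spanning hedge hsingle hv₁ hT).2
    have htree₁' := (Stmt5Aux.restrict_spanning hedge hsingle hv₁ hT').2
    have htree₂ := (Stmt5Aux.restrict_spanning hedge' hsingle' hv₂ hT).2
    have htree₂' := (Stmt5Aux.restrict_spanning hedge' hsingle' hv₂ hT').2
    have hc₁ := Stmt5Aux.tree_edge_ncard htree₁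
    have hc₁' := Stmt5Aux.tree_edge_ncard htree₁'
    have hc₂ := Stmt5Aux.tree_edge_ncard htree₂
    have hc₂' := Stmt5Aux.tree_edge_ncard htree₂'
    rw [← hA₁] at hc₁
    rw [← hB₁] at hc₁'
    rw [← hA₂] at hc₂
    rw [← hB₂] at hc₂'
    have hcard₁ : A₁.ncard = B₁.ncard := by omega
    have hcard₂ : A₂.ncard = B₂.ncard := by omega
    obtain ⟨k, hk⟩ := Stmt5Aux.even_ncard_symmDiff (Set.toFinite _) (Set.toFinite _) hcard₁
    obtain ⟨m, hm⟩ := Stmt5Aux.even_ncard_symmDiff (Set.toFinite _) (Set.toFinite _) hcard₂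
    have h0₁ : (symmDiff A₁ B₁).ncard = 0 ↔ T.induce V₁ = T'.induce V₁ := by
      rw [Set.ncard_eq_zero (Set.toFinite _)]
      rw [show (∅ : Set (Sym2 V₁)) = ⊥ from rfl, symmDiff_eq_bot]
      exact ⟨fun h => SimpleGraph.edgeSet_inj.mp h, fun h => by rw [hA₁, hB₁, h]⟩
    have h0₂ : (symmDiff A₂ B₂).ncard = 0 ↔ T.induce V₂ = T'.induce V₂ := by
      rw [Set.ncard_eq_zero (Set.toFinite _)]
      rw [show (∅ : Set (Sym2 V₂)) = ⊥ from rfl, symmDiff_eq_bot]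
      exact ⟨fun h => SimpleGraph.edgeSet_inj.mp h, fun h => by rw [hA₂, hB₂, h]⟩
    rw [hsplit]
    constructor
    · intro h
      have hcase : ((symmDiff A₁ B₁).ncard = 2 ∧ (symmDiff A₂ B₂).ncard = 0) ∨
          ((symmDiff A₁ B₁).ncard = 0 ∧ (symmDiff A₂ B₂).ncard = 2) := by omega
      rcases hcase with ⟨h2, h0⟩ | ⟨h0, h2⟩
      · exact Or.inl ⟨h2, h0₂.mp h0⟩
      · exact Or.inr ⟨h2, h0₁.mp h0⟩
    · rintro (⟨h2, heq⟩ | ⟨h2, heq⟩)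
      · have := h0₂.mpr heq; omega
      · have := h0₁.mpr heq; omega
  refine ⟨⟨⟨fun T => (⟨T.1.induce V₁, Stmt5Aux.restrict_spanning hedge hsingle hv₁ T.2⟩,
                      ⟨T.1.induce V₂, Stmt5Aux.restrict_spanning hedge' hsingle' hv₂ T.2⟩),
            fun p => ⟨Stmt5Aux.Glue V₁ V₂ p.1.1 p.2.1,
              Stmt5Aux.glue_spanning hedge hsingle hunion hv₁ hv₂ p.1.2 p.2.2⟩,
            fun T => Subtype.ext (Stmt5Aux.glue_restrict hedge T.2.1),
            fun p => Prod.ext (Subtype.ext (Stmt5Aux.induce_glue₁ hsingle))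
              (Subtype.ext (Stmt5Aux.induce_glue₂ hsingle))⟩, ?_⟩⟩
  intro a b
  rw [boxProd_adj]
  have hiff := key a.1 b.1 a.2 b.2
  constructor
  · rintro (⟨h2, heq⟩ | ⟨h2, heq⟩)
    · exact hiff.mpr (Or.inl ⟨h2, Subtype.ext_iff.mp heq⟩)
    · exact hiff.mpr (Or.inr ⟨h2, Subtype.ext_iff.mp heq⟩)
  · intro h
    rcases hiff.mp h with ⟨h2, heq⟩ | ⟨h2, heq⟩
    · exact Or.inl ⟨h2, Subtype.ext heq⟩
    · exact Or.inr ⟨h2, Subtype.ext heq⟩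
end

section
/- Let G be a finite simple bridgeless graph, i.e., no edge of G is a bridge. Then the binary relation on the edge set of G that relates two edges iff there is a cycle of G containing both of them is an equivalence relation: it is reflexive, symmetric, and transitive. -/
open SimpleGraph

section MyAux
variable {V : Type*} {G : SimpleGraph V}

lemma my_split_at_edge {a b : V} (w : G.Walk a b) {e : Sym2 V} (he : e ∈ w.edges) :
    ∃ (u v : V) (h : G.Adj u v) (w1 : G.Walk a u) (w2 : G.Walk v b),
      w = w1.append (Walk.cons h w2) ∧ e = s(u, v) := by
  induction w with
  | nil => simp at he
  | cons h' w' ih =>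
    rw [Walk.edges_cons, List.mem_cons] at he
    rcases he with he | he
    · exact ⟨_, _, h', Walk.nil, w', rfl, he⟩
    · obtain ⟨u, v, h, w1, w2, hw, hee⟩ := ih he
      exact ⟨u, v, h, Walk.cons h' w1, w2, by rw [Walk.cons_append, ← hw], hee⟩

lemma my_exists_prefix (S : Set V) {a b : V} (w : G.Walk a b) (hb : b ∈ S) :
    ∃ (q : V) (w1 : G.Walk a q) (w2 : G.Walk q b),
      w = w1.append w2 ∧ q ∈ S ∧ ∀ z ∈ w1.support, z ∈ S → z = q := by
  induction w with
  | nil => exact ⟨_, Walk.nil, Walk.nil, rfl, hb, by simp⟩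
  | @cons a c b h' w' ih =>
    by_cases ha : a ∈ S
    · exact ⟨a, Walk.nil, Walk.cons h' w', rfl, ha, by simp⟩
    · obtain ⟨q, w1, w2, hw, hq, hcond⟩ := ih hb
      refine ⟨q, Walk.cons h' w1, w2, by rw [Walk.cons_append, ← hw], hq, ?_⟩
      intro z hz hzS
      rw [Walk.support_cons, List.mem_cons] at hz
      rcases hz with rfl | hz
      · exact absurd hzS ha
      · exact hcond z hz hzS

lemma my_path_singleton {q p : V} (P : G.Walk q p) (hP : P.IsPath) (he : s(q, p) ∈ P.edges) :
    P.edges = [s(q, p)] := by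
  obtain ⟨u, v, h, w1, w2, hw, huv⟩ := my_split_at_edge P he
  have hsup := hP.support_nodup
  rw [hw, Walk.support_append, Walk.support_cons, List.tail_cons] at hsup
  rw [Sym2.eq_iff] at huv
  rcases huv with ⟨rfl, rfl⟩ | ⟨rfl, rfl⟩
  · -- u = q, v = p
    have hw1 : w1 = Walk.nil := by
      rw [← Walk.isPath_iff_eq_nil, Walk.isPath_def]
      exact hsup.sublist (List.sublist_append_left _ _)
    have hw2 : w2 = Walk.nil := by
      rw [← Walk.isPath_iff_eq_nil, Walk.isPath_def]
      exact hsup.sublist (List.sublist_append_right _ _)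
    subst hw1 hw2
    rw [hw]
    simp
  · -- u = p, v = q : impossible
    exfalso
    have hdisj := List.disjoint_of_nodup_append hsup
    exact hdisj w1.start_mem_support w2.start_mem_support

lemma my_glue {q p : V} (hqp : q ≠ p) (A : G.Walk q p) (B : G.Walk p q)
    (hA : A.IsPath) (hB : B.IsPath)
    (hsup : ∀ z ∈ A.support, z ∈ B.support → z = q ∨ z = p)
    (hedg : ∀ e ∈ A.edges, e ∉ B.edges) : (A.append B).IsCycle := by
  rw [Walk.isCycle_def]
  refine ⟨?_, ?_, ?_⟩
  · rw [Walk.isTrail_def, Walk.edges_append]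
    exact List.Nodup.append hA.isTrail.edges_nodup hB.isTrail.edges_nodup
      (fun e heA heB => hedg e heA heB)
  · cases A with
    | nil => exact absurd rfl hqp
    | cons h w => simp [Walk.cons_append]
  · rw [Walk.tail_support_append]
    have hAt : A.support.tail.Nodup := by
      have := hA.support_nodup; rw [A.support_eq_cons] at this; exact this.of_cons
    have hBt : B.support.tail.Nodup := by
      have := hB.support_nodup; rw [B.support_eq_cons] at this; exact this.of_cons
    refine List.Nodup.append hAt hBt ?_
    intro z hzA hzB
    have hzA' : z ∈ A.support := by rw [A.support_eq_cons]; exact List.mem_cons_of_mem _ hzA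
    have hzB' : z ∈ B.support := by rw [B.support_eq_cons]; exact List.mem_cons_of_mem _ hzB
    rcases hsup z hzA' hzB' with rfl | rfl
    · have := hA.support_nodup
      rw [A.support_eq_cons, List.nodup_cons] at this
      exact this.1 hzA
    · have := hB.support_nodup
      rw [B.support_eq_cons, List.nodup_cons] at this
      exact this.1 hzB



lemma my_sym2_rep (e : Sym2 V) : ∃ x y, e = s(x, y) :=
  Sym2.ind (fun x y => ⟨x, y, rfl⟩) e

lemma my_mem_support_rotate [DecidableEq V] {v u : V} (c : G.Walk v v) (h : u ∈ c.support)
    {z : V} : z ∈ (c.rotate u h).support ↔ z ∈ c.support := by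
  rw [show c.rotate u h = (c.dropUntil u h).append (c.takeUntil u h) from rfl,
    Walk.mem_support_append_iff]
  conv_rhs => rw [← Walk.take_spec c h]
  rw [Walk.mem_support_append_iff, or_comm]

end MyAux

/-- In a bridgeless graph, the relation on edges "there is a cycle containing both"
is an equivalence relation. -/
theorem stmt8 {V : Type*} [Fintype V] (G : SimpleGraph V)
    (hb : ∀ e ∈ G.edgeSet, ¬ G.IsBridge e) :
    Equivalence (fun e₁ e₂ : G.edgeSet =>
      ∃ (a : V) (c : G.Walk a a), c.IsCycle ∧ e₁.1 ∈ c.edges ∧ e₂.1 ∈ c.edges) := by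
  classical
  constructor
  · rintro ⟨e, he⟩
    have hbe := hb e he
    rw [SimpleGraph.isBridge_iff_mem_and_forall_cycle_notMem he] at hbe
    push_neg at hbe
    obtain ⟨u, c, hc, hec⟩ := hbe
    exact ⟨u, c, hc, hec, hec⟩
  · rintro e1 e2 ⟨a, c, hc, h1, h2⟩
    exact ⟨a, c, hc, h2, h1⟩
  · rintro e1 e2 e3 ⟨a1, c1, hc1, he1, he2⟩ ⟨a2, c2, hc2, he2', he3⟩
    by_cases h3 : (e3 : Sym2 V) ∈ c1.edges
    · exact ⟨a1, c1, hc1, he1, h3⟩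
    obtain ⟨x, y, hxy⟩ := my_sym2_rep (e2 : Sym2 V)
    rw [hxy] at he2 he2'
    have hadj : G.Adj x y := c1.adj_of_mem_edges he2
    have hxS : x ∈ c1.support := c1.fst_mem_support_of_mem_edges he2
    have hyS : y ∈ c1.support := c1.snd_mem_support_of_mem_edges he2
    have hx2 : x ∈ c2.support := c2.fst_mem_support_of_mem_edges he2'
    set c2x : G.Walk x x := c2.rotate x hx2 with hc2xdef
    have hc2x : c2x.IsCycle := hc2.rotate hx2
    have he3x : (e3 : Sym2 V) ∈ c2x.edges := (c2.rotate_edges x hx2).mem_iff.mpr he3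
    obtain ⟨u, v, huv, w1, w2, hsplit, he3uv⟩ := my_split_at_edge c2x he3x
    -- support decomposition of c2x
    have hsupp : c2x.support = w1.support ++ w2.support := by
      rw [hsplit, Walk.support_append, Walk.support_cons, List.tail_cons]
    have htail : c2x.support = x :: (w1.support.tail ++ w2.support) := by
      rw [hsupp]
      conv_lhs => rw [w1.support_eq_cons]
      rw [List.cons_append]
    have hnd : (w1.support.tail ++ w2.support).Nodup := by
      have := hc2x.support_nodup
      rw [htail, List.tail_cons] at this
      exact this
    obtain ⟨hnd1, hnd2, hdisj⟩ := List.nodup_append.mp hnd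
    have hxw1 : x ∉ w1.support.tail := fun hx' => hdisj _ hx' _ w2.end_mem_support rfl
    have hnodup_w1 : w1.support.Nodup := by
      rw [w1.support_eq_cons]; exact List.nodup_cons.2 ⟨hxw1, hnd1⟩
    -- split both branches at first hits of c1.support
    obtain ⟨q, r1, rest1, hw1eq, hqS, hq_only⟩ :=
      my_exists_prefix {z | z ∈ c1.support} w1.reverse hxS
    obtain ⟨p, r2, rest2, hw2eq, hpS, hp_only⟩ :=
      my_exists_prefix {z | z ∈ c1.support} w2 hxS
    simp only [Set.mem_setOf_eq] at hqS hpS hq_only hp_only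
    have hr1sub : ∀ z ∈ r1.support, z ∈ w1.support := by
      intro z hz
      have : z ∈ w1.reverse.support := by
        rw [hw1eq, Walk.mem_support_append_iff]; exact Or.inl hz
      rwa [Walk.support_reverse, List.mem_reverse] at this
    have hr2sub : ∀ z ∈ r2.support, z ∈ w2.support := by
      intro z hz
      rw [hw2eq, Walk.mem_support_append_iff]; exact Or.inl hz
    have hqp : q ≠ p := by
      rintro rfl
      have hq1 : q ∈ w1.support := hr1sub q r1.end_mem_support
      have hq2 : q ∈ w2.support := hr2sub q r2.end_mem_support
      have hqx : q = x := by
        rw [w1.support_eq_cons, List.mem_cons] at hq1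
        rcases hq1 with h | h
        · exact h
        · exact absurd hq2 (fun h2 => hdisj _ h _ h2 rfl)
      subst hqx
      have hyx : y ≠ q := fun h => hadj.ne h.symm
      have hnodup_rev : w1.reverse.support.Nodup := by
        rw [Walk.support_reverse]; exact List.nodup_reverse.mpr hnodup_w1
      have hrest1 : rest1 = Walk.nil := by
        cases rest1 with
        | nil => rfl
        | cons hh ww =>
          exfalso
          rw [hw1eq, Walk.support_append, Walk.support_cons, List.tail_cons] at hnodup_rev
          exact (List.disjoint_of_nodup_append hnodup_rev)
            r1.end_mem_support ww.end_mem_support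
      have hnodup_w2 : w2.support.Nodup := hnd2
      have hrest2 : rest2 = Walk.nil := by
        cases rest2 with
        | nil => rfl
        | cons hh ww =>
          exfalso
          rw [hw2eq, Walk.support_append, Walk.support_cons, List.tail_cons] at hnodup_w2
          exact (List.disjoint_of_nodup_append hnodup_w2)
            r2.end_mem_support ww.end_mem_support
      rw [hrest1, Walk.append_nil] at hw1eq
      rw [hrest2, Walk.append_nil] at hw2eq
      have hy2 : y ∈ c2x.support :=
        (my_mem_support_rotate c2 hx2).mpr (c2.snd_mem_support_of_mem_edges he2')
      rw [hsupp, List.mem_append] at hy2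
      rcases hy2 with hy2 | hy2
      · have : y ∈ r1.support := by
          have : y ∈ w1.reverse.support := by
            rw [Walk.support_reverse, List.mem_reverse]; exact hy2
          rwa [← hw1eq]
        exact hyx (hq_only y this hyS)
      · have : y ∈ r2.support := by rwa [hw2eq] at hy2
        exact hyx (hp_only y this hyS)
    -- the path P through e3
    set P : G.Walk q p := r1.reverse.append (Walk.cons huv r2) with hPdef
    have hPsup : P.support = r1.support.reverse ++ r2.support := by
      rw [hPdef, Walk.support_append, Walk.support_cons, List.tail_cons, Walk.support_reverse]
    have hPmem : ∀ z ∈ P.support, z ∈ c1.support → z = q ∨ z = p := by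
      intro z hz hzS
      rw [hPsup, List.mem_append, List.mem_reverse] at hz
      rcases hz with hz | hz
      · exact Or.inl (hq_only z hz hzS)
      · exact Or.inr (hp_only z hz hzS)
    have hr1nodup : r1.support.Nodup := by
      have hrev : w1.reverse.support.Nodup := by
        rw [Walk.support_reverse]; exact List.nodup_reverse.mpr hnodup_w1
      rw [hw1eq, Walk.support_append] at hrev
      exact hrev.sublist (List.sublist_append_left _ _)
    have hr2nodup : r2.support.Nodup := by
      have h2 : w2.support.Nodup := hnd2
      rw [hw2eq, Walk.support_append] at h2
      exact h2.sublist (List.sublist_append_left _ _)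
    have hdisjr : ∀ z ∈ r1.support, z ∉ r2.support := by
      intro z hz1 hz2
      have hzw1 := hr1sub z hz1
      have hzw2 := hr2sub z hz2
      rw [w1.support_eq_cons, List.mem_cons] at hzw1
      rcases hzw1 with rfl | h
      · exact hqp ((hq_only z hz1 hxS).symm.trans (hp_only z hz2 hxS))
      · exact hdisj _ h _ hzw2 rfl
    have hPpath : P.IsPath := by
      apply Walk.IsPath.mk'
      rw [hPsup]
      exact List.Nodup.append (List.nodup_reverse.mpr hr1nodup) hr2nodup
        (fun z hz1 hz2 => hdisjr z (List.mem_reverse.mp hz1) hz2)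
    have he3P : (e3 : Sym2 V) ∈ P.edges := by
      rw [he3uv, hPdef, Walk.edges_append, Walk.edges_cons]
      simp
    -- c1 side
    set c1q : G.Walk q q := c1.rotate q hqS with hc1qdef
    have hc1q : c1q.IsCycle := hc1.rotate hqS
    have he1q : (e1 : Sym2 V) ∈ c1q.edges := (c1.rotate_edges q hqS).mem_iff.mpr he1
    have hpq1 : p ∈ c1q.support := (my_mem_support_rotate c1 hqS).mpr hpS
    set t1 : G.Walk q p := c1q.takeUntil p hpq1 with ht1def
    set t2 : G.Walk p q := c1q.dropUntil p hpq1 with ht2def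
    have hts : t1.append t2 = c1q := c1q.take_spec hpq1
    have hndc : (t1.support.tail ++ t2.support.tail).Nodup := by
      have h0 := hc1q.support_nodup
      have : c1q.support = q :: (t1.support.tail ++ t2.support.tail) := by
        rw [← hts, Walk.support_append]
        conv_lhs => rw [t1.support_eq_cons]
        rw [List.cons_append]
      rw [this, List.tail_cons] at h0
      exact h0
    obtain ⟨h1nd, h2nd, hdisj2⟩ := List.nodup_append.mp hndc
    have hq_t2 : q ∈ t2.support.tail := by
      have h0 : q ∈ t2.support := t2.end_mem_support
      rw [t2.support_eq_cons, List.mem_cons] at h0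
      rcases h0 with h0 | h0
      · exact absurd h0 hqp
      · exact h0
    have hp_t1 : p ∈ t1.support.tail := by
      have h0 : p ∈ t1.support := t1.end_mem_support
      rw [t1.support_eq_cons, List.mem_cons] at h0
      rcases h0 with h0 | h0
      · exact absurd h0 (Ne.symm hqp)
      · exact h0
    have ht1path : t1.IsPath := by
      apply Walk.IsPath.mk'
      rw [t1.support_eq_cons]
      exact List.nodup_cons.2 ⟨fun h => hdisj2 _ h _ hq_t2 rfl, h1nd⟩
    have ht2path : t2.IsPath := by
      apply Walk.IsPath.mk'
      rw [t2.support_eq_cons]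
      exact List.nodup_cons.2 ⟨fun h => hdisj2 _ hp_t1 _ h rfl, h2nd⟩
    have hmemsup : ∀ z ∈ c1q.support, z ∈ c1.support :=
      fun z => (my_mem_support_rotate c1 hqS).mp
    have hmemedg : ∀ e ∈ c1q.edges, e ∈ c1.edges :=
      fun e => (c1.rotate_edges q hqS).mem_iff.mp
    -- P shares no edge with c1
    have hPc1 : ∀ e ∈ P.edges, e ∉ c1.edges := by
      intro e heP heC
      obtain ⟨cc, dd, rfl⟩ := my_sym2_rep e
      have hcP : cc ∈ P.support := P.fst_mem_support_of_mem_edges heP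
      have hdP : dd ∈ P.support := P.snd_mem_support_of_mem_edges heP
      have hcS : cc ∈ c1.support := c1.fst_mem_support_of_mem_edges heC
      have hdS : dd ∈ c1.support := c1.snd_mem_support_of_mem_edges heC
      have hne : cc ≠ dd := (P.adj_of_mem_edges heP).ne
      have heqp : s(cc, dd) = s(q, p) := by
        rcases hPmem cc hcP hcS with rfl | rfl <;> rcases hPmem dd hdP hdS with rfl | rfl
        · exact absurd rfl hne
        · rfl
        · exact Sym2.eq_swap
        · exact absurd rfl hne
      have hsingle := my_path_singleton P hPpath (heqp ▸ heP)
      rw [hsingle, List.mem_singleton] at he3P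
      rw [he3P, ← heqp] at h3
      exact h3 heC
    have he1split : (e1 : Sym2 V) ∈ t1.edges ∨ (e1 : Sym2 V) ∈ t2.edges := by
      rw [← List.mem_append, ← Walk.edges_append, hts]
      exact he1q
    rcases he1split with h | h
    · refine ⟨q, t1.append P.reverse, my_glue hqp t1 P.reverse ht1path hPpath.reverse ?_ ?_,
        ?_, ?_⟩
      · intro z hz1 hz2
        rw [Walk.support_reverse, List.mem_reverse] at hz2
        exact hPmem z hz2 (hmemsup z (c1q.support_takeUntil_subset hpq1 hz1))
      · intro e het heP
        rw [Walk.edges_reverse, List.mem_reverse] at heP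
        exact hPc1 e heP (hmemedg e (c1q.edges_takeUntil_subset hpq1 het))
      · rw [Walk.edges_append, List.mem_append]; exact Or.inl h
      · rw [Walk.edges_append, List.mem_append, Walk.edges_reverse, List.mem_reverse]
        exact Or.inr he3P
    · refine ⟨q, P.append t2, my_glue hqp P t2 hPpath ht2path ?_ ?_, ?_, ?_⟩
      · intro z hz1 hz2
        exact hPmem z hz1 (hmemsup z (c1q.support_dropUntil_subset hpq1 hz2))
      · intro e heP het
        exact hPc1 e heP (hmemedg e (c1q.edges_dropUntil_subset hpq1 het))
      · rw [Walk.edges_append, List.mem_append]; exact Or.inr h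
      · rw [Walk.edges_append, List.mem_append]; exact Or.inl he3P
end

section
/- Let G be a finite simple 2-connected graph with at least 3 vertices. Then for every pair of edges e1 and e2 of G there exists a cycle of G containing both e1 and e2. -/
open SimpleGraph

section Helpers

variable {V : Type*} {G : SimpleGraph V}

/-- Appending two paths with disjoint interiors gives a path. -/
lemma append_path {a b c : V} {p : G.Walk a b} {q : G.Walk b c}
    (hp : p.IsPath) (hq : q.IsPath)
    (h : ∀ x, x ∈ p.support → x ∈ q.support → x = b) :
    (p.append q).IsPath := by
  rw [Walk.isPath_def, Walk.support_append]
  refine List.Nodup.append hp.support_nodup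
    (hq.support_nodup.sublist (List.tail_sublist _)) ?_
  intro x hxp hxq
  have hxb : x = b := h x hxp (List.mem_of_mem_tail hxq)
  subst hxb
  have := hq.support_nodup
  rw [q.support_eq_cons] at this
  exact (List.nodup_cons.mp this).1 hxq

/-- A path between two non-deleted vertices avoiding the deleted vertex `v`. -/
lemma mem_support_rotate [DecidableEq V] {u v z : V} (c : G.Walk v v) (h : u ∈ c.support) :
    z ∈ (c.rotate u h).support ↔ z ∈ c.support := by
  rw [show c.rotate u h = (c.dropUntil u h).append (c.takeUntil u h) from rfl,
    Walk.mem_support_append_iff]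
  conv_rhs => rw [← c.take_spec h]
  rw [Walk.mem_support_append_iff]
  tauto

lemma avoid_path [DecidableEq V] {v : V} (hGv : (G.induce ({v}ᶜ : Set V)).Connected) {a b : V}
    (ha : a ≠ v) (hb : b ≠ v) :
    ∃ p : G.Walk a b, p.IsPath ∧ v ∉ p.support := by
  obtain ⟨q⟩ := hGv.preconnected ⟨a, ha⟩ ⟨b, hb⟩
  let f : G.induce ({v}ᶜ : Set V) →g G := ⟨Subtype.val, fun h => h⟩
  refine ⟨(q.map f).bypass, Walk.bypass_isPath _, fun hv => ?_⟩
  have := (q.map f).support_bypass_subset hv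
  rw [Walk.support_map] at this
  obtain ⟨x, _, hxv⟩ := List.mem_map.mp this
  exact x.2 hxv

/-- The first vertex of a path hitting a set `S`. -/
lemma first_hit {S : Set V} : ∀ {b t : V} (q : G.Walk b t), q.IsPath → t ∈ S →
    ∃ (y : V) (P : G.Walk b y), P.IsPath ∧ y ∈ S ∧ (∀ x ∈ P.support, x ∈ q.support) ∧
      (∀ x ∈ P.support, x ∈ S → x = y) := by
  intro b t q
  induction q with
  | nil =>
    intro _ ht
    exact ⟨_, Walk.nil, Walk.IsPath.nil, ht, by simp, by simp⟩
  | @cons b c t h q ih =>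
    intro hq ht
    by_cases hb : b ∈ S
    · refine ⟨b, Walk.nil, Walk.IsPath.nil, hb, by simp, by simp⟩
    · obtain ⟨y, P, hP, hy, hsub, hfst⟩ := ih hq.of_cons ht
      have hbP : b ∉ P.support := fun hbP =>
        ((Walk.cons_isPath_iff h q).mp hq).2 (hsub _ hbP)
      refine ⟨y, Walk.cons h P, hP.cons hbP, hy, ?_, ?_⟩
      · intro x hx
        rw [Walk.support_cons, List.mem_cons] at hx ⊢
        rcases hx with rfl | hx
        · exact Or.inl rfl
        · exact Or.inr (hsub _ hx)
      · intro x hx hxS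
        rw [Walk.support_cons, List.mem_cons] at hx
        rcases hx with rfl | hx
        · exact absurd hxS hb
        · exact hfst _ hx hxS

/-- Splitting a cycle at a vertex `y` distinct from its root into two
internally disjoint paths. -/
lemma cycle_split [DecidableEq V] {x y : V} (c : G.Walk x x) (hc : c.IsCycle) (hy : y ∈ c.support)
    (hyx : y ≠ x) :
    ∃ (A : G.Walk x y) (B : G.Walk y x), A.IsPath ∧ B.IsPath ∧
      (∀ e ∈ c.edges, e ∈ A.edges ∨ e ∈ B.edges) ∧
      (∀ e ∈ A.edges, e ∈ c.edges) ∧ (∀ e ∈ B.edges, e ∈ c.edges) ∧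
      (∀ z ∈ A.support, z ∈ c.support) ∧ (∀ z ∈ B.support, z ∈ c.support) ∧
      (∀ z ∈ A.support, z ∈ B.support → z = x ∨ z = y) := by
  cases c with
  | nil => exact absurd rfl hc.ne_nil
  | @cons _ w _ h p =>
    rw [Walk.cons_isCycle_iff] at hc
    obtain ⟨hp, _⟩ := hc
    have hyp : y ∈ p.support := by
      rw [Walk.support_cons, List.mem_cons] at hy
      exact hy.resolve_left hyx
    have hspec := p.take_spec hyp
    have hsup : p.support = (p.takeUntil y hyp).support ++ (p.dropUntil y hyp).support.tail := by
      conv_lhs => rw [← hspec]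
      exact Walk.support_append _ _
    have hnd := hsup ▸ hp.support_nodup
    have hdisj := List.disjoint_of_nodup_append hnd
    have hxd : x ∈ (p.dropUntil y hyp).support.tail := by
      have h1 : x ∈ (p.dropUntil y hyp).support := (p.dropUntil y hyp).end_mem_support
      rw [(p.dropUntil y hyp).support_eq_cons, List.mem_cons] at h1
      exact h1.resolve_left (fun hxy => hyx hxy.symm)
    have hxt : x ∉ (p.takeUntil y hyp).support := fun hxt => hdisj hxt hxd
    have hpe : p.edges = (p.takeUntil y hyp).edges ++ (p.dropUntil y hyp).edges := by
      conv_lhs => rw [← hspec]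
      exact Walk.edges_append _ _
    refine ⟨Walk.cons h (p.takeUntil y hyp), p.dropUntil y hyp,
      (hp.takeUntil hyp).cons hxt, hp.dropUntil hyp, ?_, ?_, ?_, ?_, ?_, ?_⟩
    · intro e he
      rw [Walk.edges_cons, List.mem_cons] at he ⊢
      rcases he with rfl | he
      · exact Or.inl (Or.inl rfl)
      · rw [hpe, List.mem_append] at he
        rcases he with he | he
        · exact Or.inl (Or.inr he)
        · exact Or.inr he
    · intro e he
      rw [Walk.edges_cons, List.mem_cons] at he ⊢
      rcases he with rfl | he
      · exact Or.inl rfl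
      · exact Or.inr (hpe ▸ List.mem_append_left _ he)
    · intro e he
      rw [Walk.edges_cons, List.mem_cons]
      exact Or.inr (hpe ▸ List.mem_append_right _ he)
    · intro z hz
      rw [Walk.support_cons, List.mem_cons] at hz ⊢
      rcases hz with rfl | hz
      · exact Or.inl rfl
      · exact Or.inr (p.support_takeUntil_subset hyp hz)
    · intro z hz
      rw [Walk.support_cons, List.mem_cons]
      exact Or.inr (p.support_dropUntil_subset hyp hz)
    · intro z hz hz'
      rw [Walk.support_cons, List.mem_cons] at hz
      rcases hz with rfl | hz
      · exact Or.inl rfl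
      · rw [(p.dropUntil y hyp).support_eq_cons, List.mem_cons] at hz'
        rcases hz' with rfl | hz'
        · exact Or.inr rfl
        · exact absurd hz' (fun hz' => hdisj hz hz')

variable [Fintype V] [DecidableEq V]

/-- In a 2-connected graph on at least 3 vertices, every edge lies on a cycle. -/
lemma edge_cycle (hG : TwoConnected G) (hV : 3 ≤ Fintype.card V) {a b : V}
    (hab : G.Adj a b) :
    ∃ c : G.Walk b b, c.IsCycle ∧ s(a, b) ∈ c.edges := by
  classical
  -- find a vertex distinct from a and b
  have hw : ∃ w : V, w ≠ a ∧ w ≠ b := by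
    by_contra hcon
    push_neg at hcon
    have hsub : (Finset.univ : Finset V) ⊆ {a, b} := by
      intro w _
      rcases eq_or_ne w a with rfl | hne
      · exact Finset.mem_insert_self _ _
      · simp [hcon w hne]
    have h1 := Finset.card_le_card hsub
    have h2 : ({a, b} : Finset V).card ≤ 2 :=
      (Finset.card_insert_le _ _).trans (by simp)
    rw [Finset.card_univ] at h1
    omega
  obtain ⟨w, hwa, hwb⟩ := hw
  -- a has a neighbour c ≠ b
  obtain ⟨q⟩ := (hG.2 b).preconnected ⟨a, by simp [hab.ne]⟩ ⟨w, by simp [hwb]⟩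
  have hq : ¬ q.Nil :=
    Walk.not_nil_of_ne (fun hh => hwa (congrArg Subtype.val hh).symm)
  have h' := q.adj_snd hq
  set c' := q.getVert 1 with hc'
  have hac : G.Adj a c'.val := h'
  have hcb : c'.val ≠ b := fun hh => c'.2 (by simp [hh])
  -- path from c' to b avoiding a
  obtain ⟨Q, hQ, haQ⟩ := avoid_path (hG.2 a) (v := a) (a := c'.val) (b := b) hac.ne' hab.ne'
  refine ⟨Walk.cons hab.symm (Walk.cons hac Q), ?_, ?_⟩
  · rw [Walk.cons_isCycle_iff]
    constructor
    · exact hQ.cons haQ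
    · rw [Walk.edges_cons, List.mem_cons]
      rintro (he | he)
      · rw [Sym2.eq_iff] at he
        rcases he with ⟨h1, h2⟩ | ⟨h1, h2⟩
        · exact hab.ne' h1
        · exact hcb h1.symm
      · exact haQ (Walk.snd_mem_support_of_mem_edges Q he)
  · rw [Walk.edges_cons, List.mem_cons]
    exact Or.inl (Sym2.eq_swap)

/-- In a 2-connected graph on at least 3 vertices, every edge and every vertex lie on a
common cycle; phrased along a walk from the vertex to an endpoint of the edge. -/
lemma edge_vertex_cycle_aux (hG : TwoConnected G) (hV : 3 ≤ Fintype.card V) {a b : V}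
    (hab : G.Adj a b) : ∀ {w : V}, G.Walk w a →
    ∃ (x : V) (c : G.Walk x x), c.IsCycle ∧ s(a, b) ∈ c.edges ∧ w ∈ c.support := by
  intro w p
  induction p with
  | nil =>
    obtain ⟨c, hc, he⟩ := edge_cycle hG hV hab
    exact ⟨b, c, hc, he, c.fst_mem_support_of_mem_edges he⟩
  | @cons w x a h q ih =>
    obtain ⟨r, C, hC, heC, hxC⟩ := ih hab
    by_cases hwC : w ∈ C.support
    · exact ⟨r, C, hC, heC, hwC⟩
    · -- rotate C to start at x
      set C' := C.rotate x hxC with hC'def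
      have hC' : C'.IsCycle := hC.rotate hxC
      have hsupC' : ∀ z, z ∈ C'.support ↔ z ∈ C.support :=
        fun z => mem_support_rotate C hxC
      have heC' : s(a, b) ∈ C'.edges := (C.rotate_edges x hxC).mem_iff.mpr heC
      have hwC' : w ∉ C'.support := fun hw => hwC ((hsupC' w).mp hw)
      have haC' : a ∈ C'.support := C'.fst_mem_support_of_mem_edges heC'
      have hbC' : b ∈ C'.support := C'.snd_mem_support_of_mem_edges heC'
      -- target vertex on the cycle, distinct from x
      set t := if x = a then b else a with htdef
      have htC' : t ∈ C'.support := by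
        rw [htdef]; split <;> assumption
      have htx : t ≠ x := by
        rw [htdef]; split
        · subst ‹x = a›; exact hab.ne'
        · exact fun hta => ‹¬ x = a› (hta ▸ rfl)
      -- path from w to t avoiding x
      obtain ⟨Q, hQ, hxQ⟩ := avoid_path (hG.2 x) (v := x) (a := w) (b := t) h.ne htx
      -- first hit of the cycle
      obtain ⟨y, P, hP, hyC', hPsub, hPfirst⟩ :=
        first_hit (S := {z | z ∈ C'.support}) Q hQ htC'
      have hxP : x ∉ P.support := fun hx => hxQ (hPsub _ hx)
      have hyx : y ≠ x := fun hyx => hxP (hyx ▸ P.end_mem_support)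
      obtain ⟨A, B, hA, hB, hor, hAe, hBe, hAs, hBs, hdisj⟩ :=
        cycle_split C' hC' hyC' hyx
      have hwP : ∀ z ∈ P.support, z ∈ C'.support → z = y := hPfirst
      rcases hor _ heC' with he | he
      · -- e ∈ A.edges, A : x → y ; cycle : w -- x --A-- y --P.rev-- w
        have hWpath : (A.append P.reverse).IsPath := by
          refine append_path hA hP.reverse ?_
          intro z hz hz'
          rw [Walk.support_reverse, List.mem_reverse] at hz'
          exact hwP z hz' (hAs z hz)
        refine ⟨w, Walk.cons h (A.append P.reverse), ?_, ?_, Walk.start_mem_support _⟩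
        · rw [Walk.cons_isCycle_iff]
          refine ⟨hWpath, ?_⟩
          rw [Walk.edges_append, List.mem_append]
          rintro (hin | hin)
          · exact hwC' (hAs _ (A.fst_mem_support_of_mem_edges hin))
          · rw [Walk.edges_reverse, List.mem_reverse] at hin
            exact hxP (P.snd_mem_support_of_mem_edges hin)
        · rw [Walk.edges_cons, List.mem_cons]
          refine Or.inr ?_
          rw [Walk.edges_append, List.mem_append]
          exact Or.inl he
      · -- e ∈ B.edges, B : y → x ; cycle : w -- x --B.rev-- y --P.rev-- w
        have hWpath : (B.reverse.append P.reverse).IsPath := by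
          refine append_path hB.reverse hP.reverse ?_
          intro z hz hz'
          rw [Walk.support_reverse, List.mem_reverse] at hz hz'
          exact hwP z hz' (hBs z hz)
        refine ⟨w, Walk.cons h (B.reverse.append P.reverse), ?_, ?_,
          Walk.start_mem_support _⟩
        · rw [Walk.cons_isCycle_iff]
          refine ⟨hWpath, ?_⟩
          rw [Walk.edges_append, List.mem_append]
          rintro (hin | hin)
          · rw [Walk.edges_reverse, List.mem_reverse] at hin
            exact hwC' (hBs _ (B.fst_mem_support_of_mem_edges hin))
          · rw [Walk.edges_reverse, List.mem_reverse] at hin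
            exact hxP (P.snd_mem_support_of_mem_edges hin)
        · rw [Walk.edges_cons, List.mem_cons]
          refine Or.inr ?_
          rw [Walk.edges_append, List.mem_append]
          refine Or.inl ?_
          rw [Walk.edges_reverse, List.mem_reverse]
          exact he

end Helpers

/-- In a 2-connected graph on at least 3 vertices, every pair of edges lies on a
common cycle. -/
theorem stmt9 {V : Type*} [Fintype V] (G : SimpleGraph V)
    (hG : TwoConnected G) (hV : 3 ≤ Fintype.card V)
    (e₁ e₂ : Sym2 V) (he₁ : e₁ ∈ G.edgeSet) (he₂ : e₂ ∈ G.edgeSet) :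
    ∃ (a : V) (c : G.Walk a a), c.IsCycle ∧ e₁ ∈ c.edges ∧ e₂ ∈ c.edges := by
  classical
  induction e₁ using Sym2.ind with
  | _ a b =>
  induction e₂ using Sym2.ind with
  | _ u v =>
  rw [SimpleGraph.mem_edgeSet] at he₁ he₂
  by_cases h12 : s(a, b) = s(u, v)
  · obtain ⟨c, hc, he⟩ := edge_cycle hG hV he₁
    exact ⟨b, c, hc, he, h12 ▸ he⟩
  · -- cycle through e₂ containing a
    obtain ⟨p⟩ := hG.1.preconnected a u
    obtain ⟨r, C, hC, he₂C, haC⟩ := edge_vertex_cycle_aux hG hV he₂ p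
    by_cases he₁C : s(a, b) ∈ C.edges
    · exact ⟨r, C, hC, he₁C, he₂C⟩
    · set C₀ := C.rotate a haC with hC₀def
      have hC₀ : C₀.IsCycle := hC.rotate haC
      have hsup : ∀ z, z ∈ C₀.support ↔ z ∈ C.support :=
        fun z => mem_support_rotate C haC
      have he₂C₀ : s(u, v) ∈ C₀.edges := (C.rotate_edges a haC).mem_iff.mpr he₂C
      have he₁C₀ : s(a, b) ∉ C₀.edges := fun hin =>
        he₁C ((C.rotate_edges a haC).mem_iff.mp hin)
      by_cases hbC : b ∈ C₀.support
      · have hba : b ≠ a := he₁.ne'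
        obtain ⟨A, B, hA, hB, hor, hAe, hBe, hAs, hBs, hdisj⟩ :=
          cycle_split C₀ hC₀ hbC hba
        rcases hor _ he₂C₀ with he | he
        · -- e₂ ∈ A.edges, A : a → b ; cycle := cons (b~a) A
          refine ⟨b, Walk.cons he₁.symm A, ?_, ?_, ?_⟩
          · rw [Walk.cons_isCycle_iff]
            refine ⟨hA, fun hin => ?_⟩
            rw [Sym2.eq_swap] at hin
            exact he₁C₀ (hAe _ hin)
          · rw [Walk.edges_cons, List.mem_cons]
            exact Or.inl Sym2.eq_swap
          · rw [Walk.edges_cons, List.mem_cons]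
            exact Or.inr he
        · -- e₂ ∈ B.edges, B : b → a ; cycle := cons (a~b) B
          refine ⟨a, Walk.cons he₁ B, ?_, ?_, ?_⟩
          · rw [Walk.cons_isCycle_iff]
            exact ⟨hB, fun hin => he₁C₀ (hBe _ hin)⟩
          · rw [Walk.edges_cons, List.mem_cons]
            exact Or.inl rfl
          · rw [Walk.edges_cons, List.mem_cons]
            exact Or.inr he
      · -- b not on the cycle
        have huC : u ∈ C₀.support := C₀.fst_mem_support_of_mem_edges he₂C₀
        have hvC : v ∈ C₀.support := C₀.snd_mem_support_of_mem_edges he₂C₀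
        set t := if u = a then v else u with htdef
        have htC : t ∈ C₀.support := by rw [htdef]; split <;> assumption
        have hta : t ≠ a := by
          rw [htdef]; split
          · subst ‹u = a›; exact he₂.ne'
          · exact ‹¬ u = a›
        obtain ⟨Q, hQ, haQ⟩ := avoid_path (hG.2 a) (v := a) (a := b) (b := t) he₁.ne' hta
        obtain ⟨y, P, hP, hyC, hPsub, hPfirst⟩ :=
          first_hit (S := {z | z ∈ C₀.support}) Q hQ htC
        have haP : a ∉ P.support := fun hx => haQ (hPsub _ hx)
        have hya : y ≠ a := fun hya => haP (hya ▸ P.end_mem_support)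
        obtain ⟨A, B, hA, hB, hor, hAe, hBe, hAs, hBs, hdisj⟩ :=
          cycle_split C₀ hC₀ hyC hya
        rcases hor _ he₂C₀ with he | he
        · -- e₂ ∈ A.edges, A : a → y ; cycle := cons (b~a) (A.append P.reverse)
          have hWpath : (A.append P.reverse).IsPath := by
            refine append_path hA hP.reverse ?_
            intro z hz hz'
            rw [Walk.support_reverse, List.mem_reverse] at hz'
            exact hPfirst z hz' (hAs z hz)
          refine ⟨b, Walk.cons he₁.symm (A.append P.reverse), ?_, ?_, ?_⟩
          · rw [Walk.cons_isCycle_iff]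
            refine ⟨hWpath, ?_⟩
            rw [Walk.edges_append, List.mem_append]
            rintro (hin | hin)
            · rw [Sym2.eq_swap] at hin
              exact he₁C₀ (hAe _ hin)
            · rw [Walk.edges_reverse, List.mem_reverse] at hin
              exact haP (P.snd_mem_support_of_mem_edges hin)
          · rw [Walk.edges_cons, List.mem_cons]
            exact Or.inl Sym2.eq_swap
          · rw [Walk.edges_cons, List.mem_cons]
            refine Or.inr ?_
            rw [Walk.edges_append, List.mem_append]
            exact Or.inl he
        · -- e₂ ∈ B.edges, B : y → a ; cycle := cons (a~b) (P.append B)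
          have hWpath : (P.append B).IsPath := by
            refine append_path hP hB ?_
            intro z hz hz'
            exact hPfirst z hz (hBs z hz')
          refine ⟨a, Walk.cons he₁ (P.append B), ?_, ?_, ?_⟩
          · rw [Walk.cons_isCycle_iff]
            refine ⟨hWpath, ?_⟩
            rw [Walk.edges_append, List.mem_append]
            rintro (hin | hin)
            · exact haP (P.fst_mem_support_of_mem_edges hin)
            · exact he₁C₀ (hBe _ hin)
          · rw [Walk.edges_cons, List.mem_cons]
            exact Or.inl rfl
          · rw [Walk.edges_cons, List.mem_cons]
            refine Or.inr ?_
            rw [Walk.edges_append, List.mem_append]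
            exact Or.inr he
end
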